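/- arXiv:2207.06505 — 4 statements merged into one kernel-verified Lean document; each statement's English description precedes it below -/
import Mathlib

section
/- Let φ be a map from a set C ⊆ ω (indexing coding nodes) to a set D, and suppose 'large' subsets of D are those L ⊆ D such that φ⁻¹[L] is cofinal above some node s in a tree. If a large set L is a finite union L = ⋃_{i<n} L_i, then at least one L_i is large. -/
/-!  The largeness lemma: a finite union of subsets of `D` which is large
(the `φ`-preimage is cofinal in some cone of the tree) has a large member. -/

variable {β D : Type}

/-- `X` is cofinal above `s` in the tree `U`: every `t ∈ U` extending `s`
has an extension in `X`. -/
def CofinalAbove (U : Set (List β)) (X : Set (List β)) (s : List β) : Prop :=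
  s ∈ U ∧ ∀ t ∈ U, s <+: t → ∃ x ∈ X, t <+: x

/-- `L ⊆ D` is large if `φ⁻¹[L]` (taken inside the set of coding nodes) is
cofinal above some node of `U`. -/
def IsLarge (U : Set (List β)) (Coding : Set (List β)) (φ : List β → D)
    (L : Set D) : Prop :=
  ∃ s : List β, CofinalAbove U {c | c ∈ Coding ∧ φ c ∈ L} s

lemma isLarge_union {U Coding : Set (List β)} {φ : List β → D} {A B : Set D}
    (h : IsLarge U Coding φ (A ∪ B)) :
    IsLarge U Coding φ A ∨ IsLarge U Coding φ B := by
  obtain ⟨s, hsU, hs⟩ := h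
  by_cases hA : IsLarge U Coding φ A
  · exact Or.inl hA
  right
  simp only [IsLarge, CofinalAbove, not_exists, not_and] at hA
  have := hA s hsU
  push_neg at this
  obtain ⟨t, htU, hst, ht⟩ := this
  refine ⟨t, htU, ?_⟩
  intro u huU htu
  obtain ⟨c, ⟨hcC, hcL⟩, huc⟩ := hs u huU (hst.trans htu)
  refine ⟨c, ⟨hcC, ?_⟩, huc⟩
  rcases hcL with hcA | hcB
  · exact absurd (htu.trans huc) (ht c ⟨hcC, hcA⟩)
  · exact hcB

theorem large_union (U : Set (List β)) (Coding : Set (List β)) (φ : List β → D)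
    (hCU : Coding ⊆ U)
    (hU : ∀ s ∈ U, ∀ t : List β, t <+: s → t ∈ U)
    (n : ℕ) (Lf : Fin n → Set D) (L : Set D) (hL : L = ⋃ i, Lf i)
    (hLarge : IsLarge U Coding φ L) :
    ∃ i : Fin n, IsLarge U Coding φ (Lf i) := by
  subst hL
  induction n with
  | zero =>
    obtain ⟨s, hsU, hs⟩ := hLarge
    obtain ⟨x, hx, _⟩ := hs s hsU (List.prefix_refl s)
    simp at hx
  | succ n ih =>
    have hsplit : (⋃ i, Lf i) =
        (⋃ i : Fin n, Lf i.castSucc) ∪ Lf (Fin.last n) := by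
      ext x
      simp only [Set.mem_iUnion, Set.mem_union]
      constructor
      · rintro ⟨i, hi⟩
        rcases Fin.eq_castSucc_or_eq_last i with ⟨j, rfl⟩ | rfl
        · exact Or.inl ⟨j, hi⟩
        · exact Or.inr hi
      · rintro (⟨i, hi⟩ | h)
        · exact ⟨i.castSucc, hi⟩
        · exact ⟨Fin.last n, h⟩
    rw [hsplit] at hLarge
    rcases isLarge_union hLarge with h | h
    · obtain ⟨i, hi⟩ := ih (fun i => Lf i.castSucc) h
      exact ⟨i.castSucc, hi⟩
    · exact ⟨Fin.last n, h⟩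
end

section
/- For every n ≥ 1, the Fraïssé class P_n of finite linear orders whose universe is partitioned by n unary predicates P_1,…,P_n satisfies SDAP. -/
/-!  SDAP for the Fraïssé class `P_n` of finite linear orders whose universe is
partitioned into `n` unary predicates.  A structure is a finite set of natural
numbers together with a strict linear order and a coloring into `Fin n`; a
1-type over `B` is coded by the cut `σs ⊆ B.V` (the elements below the new
point) together with a color `σu : Fin n`. -/

/-- A finite structure in the language `{<, P₁, …, Pₙ}`. -/
structure OStr (n : ℕ) where
  V : Finset ℕ
  lt : ℕ → ℕ → Prop
  u : ℕ → Fin n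

/-- `S` is a member of the class `P_n`: `lt` is a strict linear order on `V`. -/
def OStr.WF {n : ℕ} (S : OStr n) : Prop :=
  (∀ x ∈ S.V, ¬ S.lt x x) ∧
  (∀ x ∈ S.V, ∀ y ∈ S.V, ∀ z ∈ S.V, S.lt x y → S.lt y z → S.lt x z) ∧
  (∀ x ∈ S.V, ∀ y ∈ S.V, x ≠ y → S.lt x y ∨ S.lt y x)

/-- `S` is a substructure of `T`. -/
def OStr.Sub {n : ℕ} (S T : OStr n) : Prop :=
  S.V ⊆ T.V ∧ (∀ x ∈ S.V, ∀ y ∈ S.V, (S.lt x y ↔ T.lt x y)) ∧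
  (∀ x ∈ S.V, S.u x = T.u x)

/-- `D` is the one-point extension of `B` by `x` realizing the 1-type `(σs, σu)`. -/
def OStr.Realizes {n : ℕ} (B D : OStr n) (x : ℕ) (σs : Finset ℕ) (σu : Fin n) : Prop :=
  B.Sub D ∧ x ∉ B.V ∧ (↑D.V : Set ℕ) = insert x ↑B.V ∧
  (∀ b ∈ B.V, D.lt b x ↔ b ∈ σs) ∧ (∀ b ∈ B.V, D.lt x b ↔ b ∉ σs) ∧
  D.u x = σu

/-- one point extension of `D` by `w`, below-cut given by `s`, color `c`. -/
def ext1 {n : ℕ} (D : OStr n) (w : ℕ) (s : ℕ → Prop) (c : Fin n) : OStr n where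
  V := insert w D.V
  lt := fun x y => (x ≠ w ∧ y ≠ w ∧ D.lt x y) ∨ (x ≠ w ∧ y = w ∧ s x) ∨ (x = w ∧ y ≠ w ∧ ¬ s y)
  u := fun x => if x = w then c else D.u x

lemma ext1_V {n : ℕ} (D : OStr n) (w : ℕ) (s : ℕ → Prop) (c : Fin n) :
    (ext1 D w s c).V = insert w D.V := rfl

lemma ext1_lt {n : ℕ} (D : OStr n) (w : ℕ) (s : ℕ → Prop) (c : Fin n) (x y : ℕ) :
    (ext1 D w s c).lt x y ↔
      (x ≠ w ∧ y ≠ w ∧ D.lt x y) ∨ (x ≠ w ∧ y = w ∧ s x) ∨ (x = w ∧ y ≠ w ∧ ¬ s y) :=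
  Iff.rfl

lemma ext1_lt_old {n : ℕ} (D : OStr n) (w : ℕ) (s : ℕ → Prop) (c : Fin n) {x y : ℕ}
    (hx : x ≠ w) (hy : y ≠ w) : (ext1 D w s c).lt x y ↔ D.lt x y := by
  rw [ext1_lt]; simp [hx, hy]

lemma ext1_lt_to {n : ℕ} (D : OStr n) (w : ℕ) (s : ℕ → Prop) (c : Fin n) {x : ℕ}
    (hx : x ≠ w) : (ext1 D w s c).lt x w ↔ s x := by
  rw [ext1_lt]; simp [hx]

lemma ext1_lt_from {n : ℕ} (D : OStr n) (w : ℕ) (s : ℕ → Prop) (c : Fin n) {y : ℕ}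
    (hy : y ≠ w) : (ext1 D w s c).lt w y ↔ ¬ s y := by
  rw [ext1_lt]; simp [hy]

lemma ext1_u_old {n : ℕ} (D : OStr n) (w : ℕ) (s : ℕ → Prop) (c : Fin n) {x : ℕ}
    (hx : x ≠ w) : (ext1 D w s c).u x = D.u x := if_neg hx

lemma ext1_u_new {n : ℕ} (D : OStr n) (w : ℕ) (s : ℕ → Prop) (c : Fin n) :
    (ext1 D w s c).u w = c := if_pos rfl

lemma ext1_sub {n : ℕ} (D : OStr n) (w : ℕ) (s : ℕ → Prop) (c : Fin n) (hw : w ∉ D.V) :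
    D.Sub (ext1 D w s c) :=
  ⟨Finset.subset_insert _ _,
   fun x hx y hy => (ext1_lt_old D w s c (ne_of_mem_of_not_mem hx hw)
      (ne_of_mem_of_not_mem hy hw)).symm,
   fun x hx => (ext1_u_old D w s c (ne_of_mem_of_not_mem hx hw)).symm⟩

lemma ext1_wf {n : ℕ} (D : OStr n) (hD : D.WF) (w : ℕ) (hw : w ∉ D.V) (s : ℕ → Prop)
    (c : Fin n) (hs : ∀ x ∈ D.V, ∀ y ∈ D.V, D.lt x y → s y → s x) :
    (ext1 D w s c).WF := by
  obtain ⟨hDi, hDt, hDtot⟩ := hD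
  refine ⟨?_, ?_, ?_⟩
  · intro x hx h
    rw [ext1_lt] at h
    rcases h with ⟨hxw, _, h⟩ | ⟨hxw, hxw', _⟩ | ⟨hxw, hxw', _⟩
    · exact hDi x ((Finset.mem_insert.mp hx).resolve_left hxw) h
    · exact hxw hxw'
    · exact hxw' hxw
  · intro x hx y hy z hz hxy hyz
    have hmx := Finset.mem_insert.mp hx
    have hmy := Finset.mem_insert.mp hy
    have hmz := Finset.mem_insert.mp hz
    rw [ext1_lt] at hxy hyz ⊢
    rcases hxy with ⟨hxw, hyw, h1⟩ | ⟨hxw, hyw, h1⟩ | ⟨hxw, hyw, h1⟩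
    · rcases hyz with ⟨_, hzw, h2⟩ | ⟨_, hzw, h2⟩ | ⟨h2, _, _⟩
      · exact Or.inl ⟨hxw, hzw, hDt x (hmx.resolve_left hxw) y (hmy.resolve_left hyw)
          z (hmz.resolve_left hzw) h1 h2⟩
      · exact Or.inr (Or.inl ⟨hxw, hzw,
          hs x (hmx.resolve_left hxw) y (hmy.resolve_left hyw) h1 h2⟩)
      · exact absurd h2 hyw
    · rcases hyz with ⟨hyw', _, _⟩ | ⟨hyw', _, _⟩ | ⟨_, hzw, h2⟩
      · exact absurd hyw hyw'
      · exact absurd hyw hyw'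
      · have hxD : x ∈ D.V := hmx.resolve_left hxw
        have hzD : z ∈ D.V := hmz.resolve_left hzw
        have hxz : x ≠ z := fun h => h2 (h ▸ h1)
        rcases hDtot x hxD z hzD hxz with h | h
        · exact Or.inl ⟨hxw, hzw, h⟩
        · exact absurd (hs z hzD x hxD h h1) h2
    · rcases hyz with ⟨_, hzw, h2⟩ | ⟨_, hzw, h2⟩ | ⟨h3, _, _⟩
      · exact Or.inr (Or.inr ⟨hxw, hzw, fun hsz =>
          h1 (hs y (hmy.resolve_left hyw) z (hmz.resolve_left hzw) h2 hsz)⟩)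
      · exact absurd h2 h1
      · exact absurd h3 hyw
  · intro x hx y hy hxy
    rw [ext1_lt, ext1_lt]
    rcases Finset.mem_insert.mp hx with rfl | hxD
    · have hyD : y ∈ D.V := (Finset.mem_insert.mp hy).resolve_left (fun h => hxy h.symm)
      have hyw : y ≠ x := ne_of_mem_of_not_mem hyD hw
      by_cases hsy : s y
      · exact Or.inr (Or.inr (Or.inl ⟨hyw, rfl, hsy⟩))
      · exact Or.inl (Or.inr (Or.inr ⟨rfl, hyw, hsy⟩))
    · have hxw : x ≠ w := ne_of_mem_of_not_mem hxD hw
      rcases Finset.mem_insert.mp hy with rfl | hyD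
      · by_cases hsx : s x
        · exact Or.inl (Or.inr (Or.inl ⟨hxw, rfl, hsx⟩))
        · exact Or.inr (Or.inr (Or.inr ⟨rfl, hxw, hsx⟩))
      · have hyw : y ≠ w := ne_of_mem_of_not_mem hyD hw
        rcases hDtot x hxD y hyD hxy with h | h
        · exact Or.inl (Or.inl ⟨hxw, hyw, h⟩)
        · exact Or.inr (Or.inl ⟨hyw, hxw, h⟩)

lemma wf_restrict {n : ℕ} (T : OStr n) (V : Finset ℕ) (hV : V ⊆ T.V) (hT : T.WF) :
    OStr.WF ⟨V, T.lt, T.u⟩ := by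
  obtain ⟨h1, h2, h3⟩ := hT
  exact ⟨fun x hx => h1 x (hV hx),
         fun x hx y hy z hz => h2 x (hV hx) y (hV hy) z (hV hz),
         fun x hx y hy => h3 x (hV hx) y (hV hy)⟩

theorem sdap_Pn (n : ℕ) (hn : 1 ≤ n)
    (A C : OStr n) (hA : A.WF) (hC : C.WF) (hsub : A.Sub C)
    (v w : ℕ) (hv : v ∉ A.V) (hw : w ∉ A.V) (hvw : v ≠ w)
    (hCV : (↑C.V : Set ℕ) = ↑A.V ∪ {v, w}) :
    -- there are `A' ⊇ A` and a disjoint amalgam `C'` of `A'` and `C` over `A`,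
    -- with new points `v'`, `w'`:
    ∃ (A' C' : OStr n) (v' w' : ℕ), A'.WF ∧ C'.WF ∧ A.Sub A' ∧ A'.Sub C' ∧
      v' ∉ A'.V ∧ w' ∉ A'.V ∧ v' ≠ w' ∧ (↑C'.V : Set ℕ) = ↑A'.V ∪ {v', w'} ∧
      -- `C` embeds into `C'` over `A` via `v ↦ v'`, `w ↦ w'`:
      (∀ a ∈ A.V, (C.lt a v ↔ C'.lt a v') ∧ (C.lt v a ↔ C'.lt v' a) ∧
        (C.lt a w ↔ C'.lt a w') ∧ (C.lt w a ↔ C'.lt w' a)) ∧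
      (C.lt v w ↔ C'.lt v' w') ∧ (C.lt w v ↔ C'.lt w' v') ∧
      C'.u v' = C.u v ∧ C'.u w' = C.u w ∧
      -- such that: for all `B ⊇ A'` in the class,
      (∀ B : OStr n, B.WF → A'.Sub B →
        -- all 1-types `σ`, `τ` over `B`
        ∀ (σs τs : Finset ℕ) (σu τu : Fin n), σs ⊆ B.V → τs ⊆ B.V →
        (∀ x ∈ σs, ∀ y ∈ B.V, B.lt y x → y ∈ σs) →
        (∀ x ∈ τs, ∀ y ∈ B.V, B.lt y x → y ∈ τs) →
        -- extending `tp(v'/A')` resp. `tp(w'/A')`: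
        ((↑σs ∩ ↑A'.V : Set ℕ) = {a | a ∈ A'.V ∧ C'.lt a v'}) → σu = C'.u v' →
        ((↑τs ∩ ↑A'.V : Set ℕ) = {a | a ∈ A'.V ∧ C'.lt a w'}) → τu = C'.u w' →
        -- and any one-point extension `D` of `B` realizing `σ` via `v''`:
        ∀ (D : OStr n) (v'' : ℕ), D.WF → B.Realizes D v'' σs σu →
        -- there is a one-point extension `E` of `D` by `w''` realizing `τ`
        ∃ (E : OStr n) (w'' : ℕ), E.WF ∧ D.Sub E ∧ w'' ∉ D.V ∧
          (↑E.V : Set ℕ) = insert w'' ↑D.V ∧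
          (∀ b ∈ B.V, E.lt b w'' ↔ b ∈ τs) ∧ (∀ b ∈ B.V, E.lt w'' b ↔ b ∉ τs) ∧
          E.u w'' = τu ∧
          -- with `E ↾ (A ∪ {v'', w''}) ≅ C` via the identity on `A`,
          -- `v ↦ v''`, `w ↦ w''`:
          (∀ a ∈ A.V, (E.lt a v'' ↔ C.lt a v) ∧ (E.lt v'' a ↔ C.lt v a) ∧
            (E.lt a w'' ↔ C.lt a w) ∧ (E.lt w'' a ↔ C.lt w a)) ∧
          (E.lt v'' w'' ↔ C.lt v w) ∧ (E.lt w'' v'' ↔ C.lt w v) ∧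
          E.u v'' = C.u v ∧ E.u w'' = C.u w) := by
  classical
  have hCi := hC.1
  have hCt := hC.2.1
  have hCtot := hC.2.2
  have hvC : v ∈ C.V := by
    have h : v ∈ (↑A.V ∪ {v, w} : Set ℕ) := by simp
    rw [← hCV] at h; exact_mod_cast h
  have hwC : w ∈ C.V := by
    have h : w ∈ (↑A.V ∪ {v, w} : Set ℕ) := by simp
    rw [← hCV] at h; exact_mod_cast h
  have hAC : A.V ⊆ C.V := hsub.1
  have hasym : ∀ x ∈ C.V, ∀ y ∈ C.V, C.lt x y → ¬ C.lt y x := fun x hx y hy h1 h2 =>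
    hCi x hx (hCt x hx y hy x hx h1 h2)
  have hflip : ∀ x ∈ C.V, ∀ y ∈ C.V, x ≠ y → (¬ C.lt x y ↔ C.lt y x) := fun x hx y hy hxy =>
    ⟨fun h => (hCtot x hx y hy hxy).resolve_left h, fun h h' => hasym y hy x hx h h'⟩
  have hor : C.lt v w ∨ C.lt w v := hCtot v hvC w hwC hvw
  set p : ℕ := C.V.sup id + 1 with hpdef
  have hpC : p ∉ C.V := by
    intro h
    have h2 := Finset.le_sup (f := id) h
    simp only [id_eq] at h2
    omega
  set lo : ℕ := if C.lt v w then v else w with hlodef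
  have hlo : (lo = v ∧ C.lt v w ∧ ¬ C.lt w v) ∨ (lo = w ∧ C.lt w v ∧ ¬ C.lt v w) := by
    by_cases h : C.lt v w
    · exact Or.inl ⟨if_pos h, h, hasym v hvC w hwC h⟩
    · exact Or.inr ⟨if_neg h, hor.resolve_left h, h⟩
  have hloC : lo ∈ C.V := by rcases hlo with ⟨h, _, _⟩ | ⟨h, _, _⟩ <;> rw [h] <;> assumption
  set s0 : ℕ → Prop := fun x => C.lt x lo ∨ x = lo with hs0def
  set C' : OStr n := ext1 C p s0 (C.u lo) with hC'def
  set A' : OStr n := ⟨insert p A.V, C'.lt, C'.u⟩ with hA'def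
  have hs0closed : ∀ x ∈ C.V, ∀ y ∈ C.V, C.lt x y → s0 y → s0 x := by
    intro x hx y hy hxy hy0
    rcases hy0 with h | h
    · exact Or.inl (hCt x hx y hy lo hloC hxy h)
    · exact Or.inl (h ▸ hxy)
  have hC'wf : C'.WF := by rw [hC'def]; exact ext1_wf C hC p hpC s0 (C.u lo) hs0closed
  have hvp : v ≠ p := ne_of_mem_of_not_mem hvC hpC
  have hwp : w ≠ p := ne_of_mem_of_not_mem hwC hpC
  have hC'old : ∀ {x y : ℕ}, x ≠ p → y ≠ p → (C'.lt x y ↔ C.lt x y) := by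
    intro x y hx hy
    rw [hC'def]; exact ext1_lt_old C p s0 (C.u lo) hx hy
  have hC'uold : ∀ {x : ℕ}, x ≠ p → C'.u x = C.u x := by
    intro x hx
    rw [hC'def]; exact ext1_u_old C p s0 (C.u lo) hx
  have hA'V : A'.V = insert p A.V := by rw [hA'def]
  have hA'lt : ∀ x y, A'.lt x y ↔ C'.lt x y := by intro x y; rw [hA'def]
  have hA'u : ∀ x, A'.u x = C'.u x := by intro x; rw [hA'def]
  have hC'V : C'.V = insert p C.V := by rw [hC'def, ext1_V]
  refine ⟨A', C', v, w, ?_, hC'wf, ?_, ?_, ?_, ?_, hvw, ?_, ?_, ?_, ?_, ?_, ?_, ?_⟩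
  · -- A'.WF
    rw [hA'def]
    refine wf_restrict C' (insert p A.V) ?_ hC'wf
    rw [hC'V]
    exact Finset.insert_subset_insert p hAC
  · -- A.Sub A'
    refine ⟨?_, ?_, ?_⟩
    · rw [hA'V]; exact Finset.subset_insert _ _
    · intro x hx y hy
      rw [hA'lt, hC'old (ne_of_mem_of_not_mem (hAC hx) hpC) (ne_of_mem_of_not_mem (hAC hy) hpC)]
      exact hsub.2.1 x hx y hy
    · intro x hx
      rw [hA'u, hC'uold (ne_of_mem_of_not_mem (hAC hx) hpC)]
      exact hsub.2.2 x hx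
  · -- A'.Sub C'
    refine ⟨?_, fun x _ y _ => hA'lt x y, fun x _ => hA'u x⟩
    rw [hA'V, hC'V]
    exact Finset.insert_subset_insert p hAC
  · -- v ∉ A'.V
    rw [hA'V]
    intro h
    rcases Finset.mem_insert.mp h with h | h
    · exact hvp h
    · exact hv h
  · -- w ∉ A'.V
    rw [hA'V]
    intro h
    rcases Finset.mem_insert.mp h with h | h
    · exact hwp h
    · exact hw h
  · -- coe V eq
    have hCVm := Set.ext_iff.mp hCV
    rw [hC'V, hA'V]
    ext x
    have h := hCVm x
    simp only [Finset.coe_insert, Set.mem_insert_iff, Set.mem_union, Finset.mem_coe,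
      Set.mem_singleton_iff] at h ⊢
    tauto
  · -- embedding of C into C' over A
    intro a ha
    have haC : a ∈ C.V := hAC ha
    have hap : a ≠ p := ne_of_mem_of_not_mem haC hpC
    exact ⟨(hC'old hap hvp).symm, (hC'old hvp hap).symm,
      (hC'old hap hwp).symm, (hC'old hwp hap).symm⟩
  · exact (hC'old hvp hwp).symm
  · exact (hC'old hwp hvp).symm
  · exact hC'uold hvp
  · exact hC'uold hwp
  · -- the main SDAP condition
    intro B hB hA'B σs τs σu τu hσB hτB hσcl hτcl hσA' hσu hτA' hτu D v'' hD hreal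
    obtain ⟨hBD, hv''B, hDVset, hltin, hltout, hDuv⟩ := hreal
    have hBtot := hB.2.2
    have hA'BV : A'.V ⊆ B.V := hA'B.1
    have hpB : p ∈ B.V := hA'BV (by rw [hA'V]; exact Finset.mem_insert_self _ _)
    have hABV : A.V ⊆ B.V := fun x hx => hA'BV (by rw [hA'V]; exact Finset.mem_insert_of_mem hx)
    have hmemD : ∀ x, x ∈ D.V ↔ x = v'' ∨ x ∈ B.V := by
      intro x
      have h := Set.ext_iff.mp hDVset x
      simpa using h
    have hv''D : v'' ∈ D.V := (hmemD v'').mpr (Or.inl rfl)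
    have hBDV : B.V ⊆ D.V := hBD.1
    have hσiff : ∀ a ∈ A'.V, (a ∈ σs ↔ C'.lt a v) := by
      intro a ha
      have h := Set.ext_iff.mp hσA' a
      simp only [Set.mem_inter_iff, Finset.mem_coe, Set.mem_setOf_eq] at h
      exact ⟨fun h1 => (h.mp ⟨h1, ha⟩).2, fun h1 => (h.mpr ⟨ha, h1⟩).1⟩
    have hτiff : ∀ a ∈ A'.V, (a ∈ τs ↔ C'.lt a w) := by
      intro a ha
      have h := Set.ext_iff.mp hτA' a
      simp only [Set.mem_inter_iff, Finset.mem_coe, Set.mem_setOf_eq] at h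
      exact ⟨fun h1 => (h.mp ⟨h1, ha⟩).2, fun h1 => (h.mpr ⟨ha, h1⟩).1⟩
    have hpA' : p ∈ A'.V := by rw [hA'V]; exact Finset.mem_insert_self _ _
    have hC'fromp : ∀ {y : ℕ}, y ≠ p → (C'.lt p y ↔ ¬ s0 y) := by
      intro y hy
      rw [hC'def]; exact ext1_lt_from C p s0 (C.u lo) hy
    have hpσ : p ∈ σs ↔ C.lt w v := by
      rw [hσiff p hpA', hC'fromp hvp]
      rcases hlo with ⟨hl, h1, h2⟩ | ⟨hl, h1, h2⟩ <;> rw [hs0def, hl] <;> simp [hvw, h1, h2]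
    have hpτ : p ∈ τs ↔ C.lt v w := by
      rw [hτiff p hpA', hC'fromp hwp]
      rcases hlo with ⟨hl, h1, h2⟩ | ⟨hl, h1, h2⟩ <;> rw [hs0def, hl] <;>
        simp [Ne.symm hvw, h1, h2, hasym v hvC w hwC, hasym w hwC v hvC]
    have hστ : C.lt v w → σs ⊆ τs := by
      intro hlt b hb
      have hbB : b ∈ B.V := hσB hb
      have hpτ' : p ∈ τs := hpτ.mpr hlt
      have hpσ' : p ∉ σs := fun h => hasym v hvC w hwC hlt (hpσ.mp h)
      have hbp : b ≠ p := fun h => hpσ' (h ▸ hb)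
      rcases hBtot b hbB p hpB hbp with h | h
      · exact hτcl p hpτ' b hbB h
      · exact absurd (hσcl b hb p hpB h) hpσ'
    have hτσ : C.lt w v → τs ⊆ σs := by
      intro hlt b hb
      have hbB : b ∈ B.V := hτB hb
      have hpσ' : p ∈ σs := hpσ.mpr hlt
      have hpτ' : p ∉ τs := fun h => hasym w hwC v hvC hlt (hpτ.mp h)
      have hbp : b ≠ p := fun h => hpτ' (h ▸ hb)
      rcases hBtot b hbB p hpB hbp with h | h
      · exact hσcl p hpσ' b hbB h
      · exact absurd (hτcl b hb p hpB h) hpτ'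
    set w'' : ℕ := D.V.sup id + 1 with hw''def
    have hw''D : w'' ∉ D.V := by
      intro h
      have h2 := Finset.le_sup (f := id) h
      simp only [id_eq] at h2
      omega
    set s : ℕ → Prop := fun d => if d = v'' then C.lt v w else d ∈ τs with hsdef
    have hsv'' : s v'' = C.lt v w := by rw [hsdef]; simp
    have hsB : ∀ b ∈ B.V, (s b ↔ b ∈ τs) := by
      intro b hb
      rw [hsdef]
      simp [ne_of_mem_of_not_mem hb hv''B]
    have hsclosed : ∀ x ∈ D.V, ∀ y ∈ D.V, D.lt x y → s y → s x := by
      intro x hx y hy hxy hsy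
      rcases (hmemD x).mp hx with rfl | hxB
      · rw [hsv'']
        rcases (hmemD y).mp hy with rfl | hyB
        · exact absurd hxy (hD.1 _ hx)
        · rw [hsB y hyB] at hsy
          have hyσ : y ∉ σs := (hltout y hyB).mp hxy
          rcases hor with h | h
          · exact h
          · exact absurd (hτσ h hsy) hyσ
      · rw [hsB x hxB]
        rcases (hmemD y).mp hy with rfl | hyB
        · rw [hsv''] at hsy
          exact hστ hsy ((hltin x hxB).mp hxy)
        · rw [hsB y hyB] at hsy
          exact hτcl y hsy x hxB ((hBD.2.1 x hxB y hyB).mpr hxy)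
    have hv''w'' : v'' ≠ w'' := ne_of_mem_of_not_mem hv''D hw''D
    refine ⟨ext1 D w'' s τu, w'', ext1_wf D hD w'' hw''D s τu hsclosed,
      ext1_sub D w'' s τu hw''D, hw''D, ?_, ?_, ?_, ext1_u_new D w'' s τu, ?_, ?_, ?_, ?_, ?_⟩
    · rw [ext1_V, Finset.coe_insert]
    · intro b hb
      have hbw : b ≠ w'' := ne_of_mem_of_not_mem (hBDV hb) hw''D
      rw [ext1_lt_to D w'' s τu hbw]
      exact hsB b hb
    · intro b hb
      have hbw : b ≠ w'' := ne_of_mem_of_not_mem (hBDV hb) hw''D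
      rw [ext1_lt_from D w'' s τu hbw]
      exact not_congr (hsB b hb)
    · intro a ha
      have haB : a ∈ B.V := hABV ha
      have haD : a ∈ D.V := hBDV haB
      have haC : a ∈ C.V := hAC ha
      have hap : a ≠ p := ne_of_mem_of_not_mem haC hpC
      have haw'' : a ≠ w'' := ne_of_mem_of_not_mem haD hw''D
      have hav'' : a ≠ v'' := ne_of_mem_of_not_mem haB hv''B
      have hav : a ≠ v := fun h => hv (h ▸ ha)
      have haw : a ≠ w := fun h => hw (h ▸ ha)
      have haA' : a ∈ A'.V := by rw [hA'V]; exact Finset.mem_insert_of_mem ha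
      have hσa : a ∈ σs ↔ C.lt a v := by rw [hσiff a haA', hC'old hap hvp]
      have hτa : a ∈ τs ↔ C.lt a w := by rw [hτiff a haA', hC'old hap hwp]
      refine ⟨?_, ?_, ?_, ?_⟩
      · rw [ext1_lt_old D w'' s τu haw'' hv''w'', hltin a haB]
        exact hσa
      · rw [ext1_lt_old D w'' s τu hv''w'' haw'', hltout a haB, hσa]
        exact hflip a haC v hvC hav
      · rw [ext1_lt_to D w'' s τu haw'', hsB a haB]
        exact hτa
      · rw [ext1_lt_from D w'' s τu haw'', hsB a haB, hτa]
        exact hflip a haC w hwC haw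
    · rw [ext1_lt_to D w'' s τu hv''w'', hsv'']
    · rw [ext1_lt_from D w'' s τu hv''w'', hsv'']
      exact hflip v hvC w hwC hvw
    · rw [ext1_u_old D w'' s τu hv''w'', hDuv, hσu, hC'uold hvp]
    · rw [ext1_u_new D w'' s τu, hτu, hC'uold hwp]
end

section
/- Every Fraïssé class in the family LOE — finite structures with finitely many linear orders, finitely many convexly ordered equivalence relations (each convex with respect to one of the linear orders), and a partition into finitely many unary predicates — satisfies SDAP. -/
/-!  SDAP for the Fraïssé classes in `LOE`: finite structures with `m` linear
orders, `n` equivalence relations — the `j`-th being convexly ordered with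
respect to the `κ j`-th linear order — and a partition into `p` unary
predicates.  A 1-type over `B` is coded by, for each linear order, the cut
`σlt i ⊆ B.V`; for each equivalence relation, the set `σE j ⊆ B.V` of elements
equivalent to the new point; and a unary color `σu : Fin p`. -/

/-- A finite structure in the language of `LOE_{m,n,p}`. -/
structure LStr (m n p : ℕ) where
  V : Finset ℕ
  lt : Fin m → ℕ → ℕ → Prop
  E : Fin n → ℕ → ℕ → Prop
  u : ℕ → Fin p

/-- Membership in the class: each `lt i` is a strict linear order on `V`, each
`E j` is an equivalence relation on `V` which is convex with respect to the
linear order `lt (κ j)`. -/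
def LStr.WF {m n p : ℕ} (κ : Fin n → Fin m) (S : LStr m n p) : Prop :=
  (∀ i, ∀ x ∈ S.V, ¬ S.lt i x x) ∧
  (∀ i, ∀ x ∈ S.V, ∀ y ∈ S.V, ∀ z ∈ S.V, S.lt i x y → S.lt i y z → S.lt i x z) ∧
  (∀ i, ∀ x ∈ S.V, ∀ y ∈ S.V, x ≠ y → S.lt i x y ∨ S.lt i y x) ∧
  (∀ j, ∀ x ∈ S.V, S.E j x x) ∧
  (∀ j, ∀ x ∈ S.V, ∀ y ∈ S.V, S.E j x y → S.E j y x) ∧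
  (∀ j, ∀ x ∈ S.V, ∀ y ∈ S.V, ∀ z ∈ S.V, S.E j x y → S.E j y z → S.E j x z) ∧
  -- convexity of `E j` with respect to `lt (κ j)`:
  (∀ j, ∀ x ∈ S.V, ∀ y ∈ S.V, ∀ z ∈ S.V,
    S.E j x y → S.lt (κ j) x z → S.lt (κ j) z y → S.E j x z)

/-- `S` is a substructure of `T`. -/
def LStr.Sub {m n p : ℕ} (S T : LStr m n p) : Prop :=
  S.V ⊆ T.V ∧ (∀ i, ∀ x ∈ S.V, ∀ y ∈ S.V, (S.lt i x y ↔ T.lt i x y)) ∧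
  (∀ j, ∀ x ∈ S.V, ∀ y ∈ S.V, (S.E j x y ↔ T.E j x y)) ∧
  (∀ x ∈ S.V, S.u x = T.u x)

/-- `D` is the one-point extension of `B` by `x` realizing the 1-type
`(σlt, σE, σu)` over `B`. -/
def LStr.Realizes {m n p : ℕ} (B D : LStr m n p) (x : ℕ)
    (σlt : Fin m → Finset ℕ) (σE : Fin n → Finset ℕ) (σu : Fin p) : Prop :=
  B.Sub D ∧ x ∉ B.V ∧ (↑D.V : Set ℕ) = insert x ↑B.V ∧
  (∀ i, ∀ b ∈ B.V, D.lt i b x ↔ b ∈ σlt i) ∧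
  (∀ i, ∀ b ∈ B.V, D.lt i x b ↔ b ∉ σlt i) ∧
  (∀ j, ∀ b ∈ B.V, D.E j x b ↔ b ∈ σE j) ∧
  D.u x = σu

section Helpers

variable {m n p : ℕ}

lemma LStr.WF_restrict (κ : Fin n → Fin m) (S : LStr m n p) (hS : S.WF κ)
    (V' : Finset ℕ) (h : V' ⊆ S.V) : (LStr.mk V' S.lt S.E S.u).WF κ := by
  obtain ⟨h1, h2, h3, h4, h5, h6, h7⟩ := hS
  exact ⟨fun i x hx => h1 i x (h hx),
    fun i x hx y hy z hz => h2 i x (h hx) y (h hy) z (h hz),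
    fun i x hx y hy => h3 i x (h hx) y (h hy),
    fun j x hx => h4 j x (h hx),
    fun j x hx y hy => h5 j x (h hx) y (h hy),
    fun j x hx y hy z hz => h6 j x (h hx) y (h hy) z (h hz),
    fun j x hx y hy z hz => h7 j x (h hx) y (h hy) z (h hz)⟩

lemma LStr.Sub_restrict (S : LStr m n p) (V' : Finset ℕ) (h : V' ⊆ S.V) :
    (LStr.mk V' S.lt S.E S.u).Sub S :=
  ⟨h, fun _ _ _ _ _ => Iff.rfl, fun _ _ _ _ _ => Iff.rfl, fun _ _ => rfl⟩

lemma pullback_WF (κ : Fin n → Fin m) (T : LStr m n p) (hT : T.WF κ)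
    (V' : Finset ℕ) (f : ℕ → ℕ) (R : ℕ → ℕ → Prop)
    (hf : ∀ x ∈ V', f x ∈ T.V)
    (hR1 : ∀ x y, R x y → f x = f y)
    (hR2 : ∀ x y, R x y → ¬ R y x)
    (hR3 : ∀ x ∈ V', ∀ y ∈ V', x ≠ y → f x = f y → R x y ∨ R y x)
    (hR4 : ∀ x y z, R x y → R y z → R x z) :
    (LStr.mk V' (fun i a b => T.lt i (f a) (f b) ∨ R a b)
      (fun j a b => T.E j (f a) (f b)) (fun a => T.u (f a))).WF κ := by
  obtain ⟨h1, h2, h3, h4, h5, h6, h7⟩ := hT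
  refine ⟨?_, ?_, ?_, ?_, ?_, ?_, ?_⟩
  · rintro i x hx (h | h)
    · exact h1 i (f x) (hf x hx) h
    · exact hR2 x x h h
  · rintro i x hx y hy z hz (hxy | hxy) (hyz | hyz)
    · exact Or.inl (h2 i _ (hf x hx) _ (hf y hy) _ (hf z hz) hxy hyz)
    · exact Or.inl ((hR1 _ _ hyz) ▸ hxy)
    · exact Or.inl ((hR1 _ _ hxy) ▸ hyz)
    · exact Or.inr (hR4 _ _ _ hxy hyz)
  · intro i x hx y hy hne
    by_cases hfe : f x = f y
    · rcases hR3 x hx y hy hne hfe with h | h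
      · exact Or.inl (Or.inr h)
      · exact Or.inr (Or.inr h)
    · rcases h3 i _ (hf x hx) _ (hf y hy) hfe with h | h
      · exact Or.inl (Or.inl h)
      · exact Or.inr (Or.inl h)
  · exact fun j x hx => h4 j _ (hf x hx)
  · exact fun j x hx y hy h => h5 j _ (hf x hx) _ (hf y hy) h
  · exact fun j x hx y hy z hz ha hb =>
      h6 j _ (hf x hx) _ (hf y hy) _ (hf z hz) ha hb
  · rintro j x hx y hy z hz hE (hxz | hxz) (hzy | hzy)
    · exact h7 j _ (hf x hx) _ (hf y hy) _ (hf z hz) hE hxz hzy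
    · show T.E j (f x) (f z); rw [hR1 _ _ hzy]; exact hE
    · show T.E j (f x) (f z); rw [← hR1 _ _ hxz]; exact h4 j _ (hf x hx)
    · show T.E j (f x) (f z); rw [← hR1 _ _ hxz]; exact h4 j _ (hf x hx)

/-- Facts about a 1-type which is realizable over `B`. -/
lemma realize_facts (κ : Fin n → Fin m) (B T : LStr m n p) (x : ℕ)
    (slt : Fin m → Finset ℕ) (sE : Fin n → Finset ℕ) (su : Fin p)
    (hT : T.WF κ) (h : B.Realizes T x slt sE su) :
    (∀ i, ∀ b ∈ B.V, ∀ c ∈ B.V, c ∈ slt i → B.lt i b c → b ∈ slt i) ∧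
    (∀ i, ∀ b ∈ B.V, ∀ c ∈ B.V, b ∈ slt i → c ∉ slt i → B.lt i b c) ∧
    (∀ j, ∀ b ∈ B.V, ∀ c ∈ B.V, b ∈ sE j → B.E j b c → c ∈ sE j) ∧
    (∀ j, ∀ b ∈ B.V, ∀ c ∈ B.V, b ∈ sE j → c ∈ sE j → B.E j b c) ∧
    (∀ j, ∀ b ∈ B.V, ∀ c ∈ B.V, b ∈ sE j → B.lt (κ j) b c → c ∈ slt (κ j) → B.E j b c) ∧
    (∀ j, ∀ b ∈ B.V, ∀ c ∈ B.V, b ∈ sE j → c ∉ slt (κ j) → B.lt (κ j) c b → c ∈ sE j) ∧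
    (∀ j, ∀ b ∈ B.V, ∀ c ∈ B.V, B.E j b c → b ∈ slt (κ j) → c ∉ slt (κ j) → b ∈ sE j) := by
  obtain ⟨⟨hVsub, hltiff, hEiff, _⟩, hxB, hV, hbx, hxb, hEx, _⟩ := h
  obtain ⟨hirr, htr, htot, hrefl, hsym, hetr, hconv⟩ := hT
  have hxT : x ∈ T.V := by
    rw [← Finset.mem_coe, hV]; exact Set.mem_insert _ _
  have hm : ∀ b ∈ B.V, b ∈ T.V := fun b hb => hVsub hb
  refine ⟨?_, ?_, ?_, ?_, ?_, ?_, ?_⟩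
  · intro i b hb c hc hcs hbc
    exact (hbx i b hb).mp (htr i b (hm b hb) c (hm c hc) x hxT
      ((hltiff i b hb c hc).mp hbc) ((hbx i c hc).mpr hcs))
  · intro i b hb c hc hbs hcs
    exact (hltiff i b hb c hc).mpr (htr i b (hm b hb) x hxT c (hm c hc)
      ((hbx i b hb).mpr hbs) ((hxb i c hc).mpr hcs))
  · intro j b hb c hc hbs hbc
    exact (hEx j c hc).mp (hetr j x hxT b (hm b hb) c (hm c hc)
      ((hEx j b hb).mpr hbs) ((hEiff j b hb c hc).mp hbc))
  · intro j b hb c hc hbs hcs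
    exact (hEiff j b hb c hc).mpr (hetr j b (hm b hb) x hxT c (hm c hc)
      (hsym j x hxT b (hm b hb) ((hEx j b hb).mpr hbs)) ((hEx j c hc).mpr hcs))
  · intro j b hb c hc hbs hbc hcs
    exact (hEiff j b hb c hc).mpr (hconv j b (hm b hb) x hxT c (hm c hc)
      (hsym j x hxT b (hm b hb) ((hEx j b hb).mpr hbs))
      ((hltiff (κ j) b hb c hc).mp hbc) ((hbx (κ j) c hc).mpr hcs))
  · intro j b hb c hc hbs hcs hcb
    exact (hEx j c hc).mp (hconv j x hxT b (hm b hb) c (hm c hc)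
      ((hEx j b hb).mpr hbs) ((hxb (κ j) c hc).mpr hcs)
      ((hltiff (κ j) c hc b hb).mp hcb))
  · intro j b hb c hc hbc hbs hcs
    exact (hEx j b hb).mp (hsym j b (hm b hb) x hxT
      (hconv j b (hm b hb) c (hm c hc) x hxT ((hEiff j b hb c hc).mp hbc)
        ((hbx (κ j) b hb).mpr hbs) ((hxb (κ j) c hc).mpr hcs)))

/-- One-point extension of `D` by a new point `w2`, whose position is
described by `Lw` (the set of points below `w2`) and `Ew` (the set of points
equivalent to `w2`). -/
def LStr.ext (D : LStr m n p) (w2 : ℕ) (Lw : Fin m → ℕ → Prop)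
    (Ew : Fin n → ℕ → Prop) (c : Fin p) : LStr m n p where
  V := insert w2 D.V
  lt := fun i a b => (a ≠ w2 ∧ b ≠ w2 ∧ D.lt i a b) ∨ (a ≠ w2 ∧ b = w2 ∧ Lw i a) ∨
    (a = w2 ∧ b ≠ w2 ∧ ¬ Lw i b)
  E := fun j a b => (a = w2 ∧ b = w2) ∨ (a = w2 ∧ b ≠ w2 ∧ Ew j b) ∨
    (b = w2 ∧ a ≠ w2 ∧ Ew j a) ∨ (a ≠ w2 ∧ b ≠ w2 ∧ D.E j a b)
  u := fun a => if a = w2 then c else D.u a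

lemma LStr.ext_sub (D : LStr m n p) (w2 : ℕ) (Lw : Fin m → ℕ → Prop)
    (Ew : Fin n → ℕ → Prop) (c : Fin p) (hw2 : w2 ∉ D.V) :
    D.Sub (D.ext w2 Lw Ew c) := by
  refine ⟨fun x hx => Finset.mem_insert_of_mem hx, ?_, ?_, ?_⟩
  · intro i a ha b hb
    have ha' : a ≠ w2 := fun h => hw2 (h ▸ ha)
    have hb' : b ≠ w2 := fun h => hw2 (h ▸ hb)
    simp [LStr.ext, ha', hb']
  · intro j a ha b hb
    have ha' : a ≠ w2 := fun h => hw2 (h ▸ ha)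
    have hb' : b ≠ w2 := fun h => hw2 (h ▸ hb)
    simp [LStr.ext, ha', hb']
  · intro a ha
    have ha' : a ≠ w2 := fun h => hw2 (h ▸ ha)
    simp [LStr.ext, ha']

lemma LStr.ext_WF (κ : Fin n → Fin m) (D : LStr m n p) (w2 : ℕ)
    (Lw : Fin m → ℕ → Prop) (Ew : Fin n → ℕ → Prop) (c : Fin p)
    (hD : D.WF κ) (hw2 : w2 ∉ D.V)
    (k1 : ∀ i, ∀ b ∈ D.V, ∀ c' ∈ D.V, Lw i b → D.lt i c' b → Lw i c')
    (k2 : ∀ i, ∀ b ∈ D.V, ∀ c' ∈ D.V, Lw i b → ¬ Lw i c' → D.lt i b c')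
    (k3 : ∀ j, ∀ b ∈ D.V, ∀ c' ∈ D.V, Ew j b → D.E j b c' → Ew j c')
    (k4 : ∀ j, ∀ b ∈ D.V, ∀ c' ∈ D.V, Ew j b → Ew j c' → D.E j b c')
    (k5 : ∀ j, ∀ x ∈ D.V, ∀ y ∈ D.V, D.E j x y → Lw (κ j) x → ¬ Lw (κ j) y → Ew j x)
    (k6 : ∀ j, ∀ y ∈ D.V, ∀ z ∈ D.V, Ew j y → ¬ Lw (κ j) z → D.lt (κ j) z y → Ew j z)
    (k7 : ∀ j, ∀ x ∈ D.V, ∀ z ∈ D.V, Ew j x → D.lt (κ j) x z → Lw (κ j) z → D.E j x z) :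
    (D.ext w2 Lw Ew c).WF κ := by
  obtain ⟨hirr, htr, htot, hrefl, hsym, hetr, hconv⟩ := hD
  have hmem : ∀ z, z ∈ (D.ext w2 Lw Ew c).V → z = w2 ∨ z ∈ D.V := by
    intro z hz; simpa [LStr.ext] using hz
  have hneW : ∀ z ∈ D.V, z ≠ w2 := fun z hz h => hw2 (h ▸ hz)
  refine ⟨?_, ?_, ?_, ?_, ?_, ?_, ?_⟩
  · intro i x hx
    rcases hmem x hx with h | h
    · subst h; simp [LStr.ext]
    · simp [LStr.ext, hneW x h]; exact hirr i x h
  · -- transitivity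
    intro i x hx y hy z hz hxy hyz
    rcases hxy with ⟨hx1, hy1, hxy⟩ | ⟨hx1, hy1, hxy⟩ | ⟨hx1, hy1, hxy⟩
    · rcases hyz with ⟨hy2, hz2, hyz⟩ | ⟨hy2, hz2, hyz⟩ | ⟨hy2, hz2, hyz⟩
      · have hxD := (hmem x hx).resolve_left hx1
        have hyD := (hmem y hy).resolve_left hy1
        have hzD := (hmem z hz).resolve_left hz2
        exact Or.inl ⟨hx1, hz2, htr i x hxD y hyD z hzD hxy hyz⟩
      · have hxD := (hmem x hx).resolve_left hx1
        have hyD := (hmem y hy).resolve_left hy1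
        exact Or.inr (Or.inl ⟨hx1, hz2, k1 i y hyD x hxD hyz hxy⟩)
      · exact absurd hy2 (fun h => hy1 h)
    · subst hy1
      rcases hyz with ⟨hy2, hz2, hyz⟩ | ⟨hy2, hz2, hyz⟩ | ⟨hy2, hz2, hyz⟩
      · exact absurd rfl hy2
      · exact absurd rfl hy2
      · have hxD := (hmem x hx).resolve_left hx1
        have hzD := (hmem z hz).resolve_left hz2
        exact Or.inl ⟨hx1, hz2, k2 i x hxD z hzD hxy hyz⟩
    · subst hx1
      rcases hyz with ⟨hy2, hz2, hyz⟩ | ⟨hy2, hz2, hyz⟩ | ⟨hy2, hz2, hyz⟩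
      · have hyD := (hmem y hy).resolve_left hy2
        have hzD := (hmem z hz).resolve_left hz2
        exact Or.inr (Or.inr ⟨rfl, hz2, fun hLz => hxy (k1 i z hzD y hyD hLz hyz)⟩)
      · exact absurd hyz hxy
      · exact absurd hy2 hy1
  · -- totality
    intro i x hx y hy hne
    rcases hmem x hx with hx1 | hx1 <;> rcases hmem y hy with hy1 | hy1
    · exact absurd (hx1.trans hy1.symm) hne
    · subst hx1
      by_cases h : Lw i y
      · exact Or.inr (Or.inr (Or.inl ⟨hneW y hy1, rfl, h⟩))
      · exact Or.inl (Or.inr (Or.inr ⟨rfl, hneW y hy1, h⟩))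
    · subst hy1
      by_cases h : Lw i x
      · exact Or.inl (Or.inr (Or.inl ⟨hneW x hx1, rfl, h⟩))
      · exact Or.inr (Or.inr (Or.inr ⟨rfl, hneW x hx1, h⟩))
    · rcases htot i x hx1 y hy1 hne with h | h
      · exact Or.inl (Or.inl ⟨hneW x hx1, hneW y hy1, h⟩)
      · exact Or.inr (Or.inl ⟨hneW y hy1, hneW x hx1, h⟩)
  · -- E refl
    intro j x hx
    rcases hmem x hx with hx1 | hx1
    · exact Or.inl ⟨hx1, hx1⟩
    · exact Or.inr (Or.inr (Or.inr ⟨hneW x hx1, hneW x hx1, hrefl j x hx1⟩))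
  · -- E symm
    intro j x hx y hy h
    rcases h with ⟨h1, h2⟩ | ⟨h1, h2, h3⟩ | ⟨h1, h2, h3⟩ | ⟨h1, h2, h3⟩
    · exact Or.inl ⟨h2, h1⟩
    · exact Or.inr (Or.inr (Or.inl ⟨h1, h2, h3⟩))
    · exact Or.inr (Or.inl ⟨h1, h2, h3⟩)
    · exact Or.inr (Or.inr (Or.inr ⟨h2, h1,
        hsym j x ((hmem x hx).resolve_left h1) y ((hmem y hy).resolve_left h2) h3⟩))
  · -- E trans
    intro j x hx y hy z hz hxy hyz
    rcases hxy with ⟨hx1, hy1⟩ | ⟨hx1, hy1, hxy⟩ | ⟨hy1, hx1, hxy⟩ | ⟨hx1, hy1, hxy⟩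
    · subst hx1; subst hy1
      exact hyz
    · subst hx1
      rcases hyz with ⟨hy2, hz2⟩ | ⟨hy2, hz2, hyz⟩ | ⟨hz2, hy2, hyz⟩ | ⟨hy2, hz2, hyz⟩
      · exact absurd hy2 hy1
      · exact absurd hy2 hy1
      · exact Or.inl ⟨rfl, hz2⟩
      · have hyD := (hmem y hy).resolve_left hy2
        have hzD := (hmem z hz).resolve_left hz2
        exact Or.inr (Or.inl ⟨rfl, hz2, k3 j y hyD z hzD hxy hyz⟩)
    · subst hy1
      rcases hyz with ⟨hy2, hz2⟩ | ⟨hy2, hz2, hyz⟩ | ⟨hz2, hy2, hyz⟩ | ⟨hy2, hz2, hyz⟩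
      · exact Or.inr (Or.inr (Or.inl ⟨hz2, hx1, hxy⟩))
      · have hxD := (hmem x hx).resolve_left hx1
        have hzD := (hmem z hz).resolve_left hz2
        exact Or.inr (Or.inr (Or.inr ⟨hx1, hz2, k4 j x hxD z hzD hxy hyz⟩))
      · exact absurd rfl hy2
      · exact absurd rfl hy2
    · rcases hyz with ⟨hy2, hz2⟩ | ⟨hy2, hz2, hyz⟩ | ⟨hz2, hy2, hyz⟩ | ⟨hy2, hz2, hyz⟩
      · exact absurd hy2 hy1
      · exact absurd hy2 hy1
      · have hxD := (hmem x hx).resolve_left hx1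
        have hyD := (hmem y hy).resolve_left hy1
        exact Or.inr (Or.inr (Or.inl ⟨hz2, hx1, k3 j y hyD x hxD hyz
          (hsym j x hxD y hyD hxy)⟩))
      · have hxD := (hmem x hx).resolve_left hx1
        have hyD := (hmem y hy).resolve_left hy1
        have hzD := (hmem z hz).resolve_left hz2
        exact Or.inr (Or.inr (Or.inr ⟨hx1, hz2, hetr j x hxD y hyD z hzD hxy hyz⟩))
  · -- convexity
    intro j x hx y hy z hz hE hxz hzy
    rcases hxz with ⟨hx1, hz1, hxz⟩ | ⟨hx1, hz1, hxz⟩ | ⟨hx1, hz1, hxz⟩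
    · -- x, z ∈ D
      have hxD := (hmem x hx).resolve_left hx1
      have hzD := (hmem z hz).resolve_left hz1
      rcases hzy with ⟨hz2, hy2, hzy⟩ | ⟨hz2, hy2, hzy⟩ | ⟨hz2, hy2, hzy⟩
      · -- y ∈ D too
        have hyD := (hmem y hy).resolve_left hy2
        rcases hE with ⟨h1, _⟩ | ⟨h1, _⟩ | ⟨h1, h2, hE⟩ | ⟨_, _, hE⟩
        · exact absurd h1 hx1
        · exact absurd h1 hx1
        · exact absurd h1 hy2
        · exact Or.inr (Or.inr (Or.inr ⟨hx1, hz1, hconv j x hxD y hyD z hzD hE hxz hzy⟩))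
      · -- y = w2 : E x w2, x < z < w2 ; goal E x z
        subst hy2
        rcases hE with ⟨h1, _⟩ | ⟨h1, _⟩ | ⟨_, _, hE⟩ | ⟨_, h2, _⟩
        · exact absurd h1 hx1
        · exact absurd h1 hx1
        · exact Or.inr (Or.inr (Or.inr ⟨hx1, hz1, k7 j x hxD z hzD hE hxz hzy⟩))
        · exact absurd rfl h2
      · exact absurd hz2 hz1
    · -- z = w2 : x < w2 < y,  E x y ; goal E x w2 , i.e. Ew x
      subst hz1
      have hxD := (hmem x hx).resolve_left hx1
      rcases hzy with ⟨hz2, hy2, hzy⟩ | ⟨hz2, hy2, hzy⟩ | ⟨hz2, hy2, hzy⟩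
      · exact absurd rfl hz2
      · exact absurd rfl hz2
      · -- ¬ Lw y, y ∈ D
        have hyD := (hmem y hy).resolve_left hy2
        rcases hE with ⟨h1, _⟩ | ⟨h1, _⟩ | ⟨h1, _, _⟩ | ⟨_, _, hE⟩
        · exact absurd h1 hx1
        · exact absurd h1 hx1
        · exact absurd h1 hy2
        · exact Or.inr (Or.inr (Or.inl ⟨rfl, hx1, k5 j x hxD y hyD hE hxz hzy⟩))
    · -- x = w2 : w2 < z < y, E w2 y ; goal E w2 z, i.e. Ew z
      subst hx1
      have hzD := (hmem z hz).resolve_left hz1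
      rcases hzy with ⟨hz2, hy2, hzy⟩ | ⟨hz2, hy2, hzy⟩ | ⟨hz2, hy2, hzy⟩
      · -- y ∈ D
        have hyD := (hmem y hy).resolve_left hy2
        rcases hE with ⟨_, h1⟩ | ⟨_, h1, hE⟩ | ⟨h1, h2, _⟩ | ⟨h1, _, _⟩
        · exact absurd h1 hy2
        · exact Or.inr (Or.inl ⟨rfl, hz1, k6 j y hyD z hzD hE hxz hzy⟩)
        · exact absurd rfl h2
        · exact absurd rfl h1
      · -- y = w2, z < w2 i.e. Lw z, but ¬ Lw z : contradiction
        exact absurd hzy hxz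
      · exact absurd hz2 hz1

lemma LStr.ext_mem_coe (D : LStr m n p) (w2 : ℕ) (Lw : Fin m → ℕ → Prop)
    (Ew : Fin n → ℕ → Prop) (c : Fin p) :
    (↑(D.ext w2 Lw Ew c).V : Set ℕ) = insert w2 ↑D.V := by
  simp [LStr.ext]

lemma LStr.ext_lt_old (D : LStr m n p) (w2 : ℕ) (Lw : Fin m → ℕ → Prop)
    (Ew : Fin n → ℕ → Prop) (c : Fin p) {i : Fin m} {a b : ℕ}
    (ha : a ≠ w2) (hb : b ≠ w2) :
    ((D.ext w2 Lw Ew c).lt i a b ↔ D.lt i a b) := by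
  simp [LStr.ext, ha, hb]

lemma LStr.ext_lt_to (D : LStr m n p) (w2 : ℕ) (Lw : Fin m → ℕ → Prop)
    (Ew : Fin n → ℕ → Prop) (c : Fin p) {i : Fin m} {b : ℕ} (hb : b ≠ w2) :
    ((D.ext w2 Lw Ew c).lt i b w2 ↔ Lw i b) := by
  simp [LStr.ext, hb]

lemma LStr.ext_lt_from (D : LStr m n p) (w2 : ℕ) (Lw : Fin m → ℕ → Prop)
    (Ew : Fin n → ℕ → Prop) (c : Fin p) {i : Fin m} {b : ℕ} (hb : b ≠ w2) :
    ((D.ext w2 Lw Ew c).lt i w2 b ↔ ¬ Lw i b) := by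
  simp [LStr.ext, hb]

lemma LStr.ext_E_old (D : LStr m n p) (w2 : ℕ) (Lw : Fin m → ℕ → Prop)
    (Ew : Fin n → ℕ → Prop) (c : Fin p) {j : Fin n} {a b : ℕ}
    (ha : a ≠ w2) (hb : b ≠ w2) :
    ((D.ext w2 Lw Ew c).E j a b ↔ D.E j a b) := by
  simp [LStr.ext, ha, hb]

lemma LStr.ext_E_to (D : LStr m n p) (w2 : ℕ) (Lw : Fin m → ℕ → Prop)
    (Ew : Fin n → ℕ → Prop) (c : Fin p) {j : Fin n} {b : ℕ} (hb : b ≠ w2) :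
    ((D.ext w2 Lw Ew c).E j b w2 ↔ Ew j b) := by
  simp [LStr.ext, hb]

lemma LStr.ext_E_from (D : LStr m n p) (w2 : ℕ) (Lw : Fin m → ℕ → Prop)
    (Ew : Fin n → ℕ → Prop) (c : Fin p) {j : Fin n} {b : ℕ} (hb : b ≠ w2) :
    ((D.ext w2 Lw Ew c).E j w2 b ↔ Ew j b) := by
  simp [LStr.ext, hb]

lemma LStr.ext_u_new (D : LStr m n p) (w2 : ℕ) (Lw : Fin m → ℕ → Prop)
    (Ew : Fin n → ℕ → Prop) (c : Fin p) : (D.ext w2 Lw Ew c).u w2 = c := by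
  simp [LStr.ext]

lemma LStr.ext_u_old (D : LStr m n p) (w2 : ℕ) (Lw : Fin m → ℕ → Prop)
    (Ew : Fin n → ℕ → Prop) (c : Fin p) {a : ℕ} (ha : a ≠ w2) :
    (D.ext w2 Lw Ew c).u a = D.u a := by
  simp [LStr.ext, ha]

end Helpers

set_option maxHeartbeats 1000000

theorem sdap_LOE (m n p : ℕ) (κ : Fin n → Fin m)
    (A C : LStr m n p) (hA : A.WF κ) (hC : C.WF κ) (hsub : A.Sub C)
    (v w : ℕ) (hv : v ∉ A.V) (hw : w ∉ A.V) (hvw : v ≠ w)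
    (hCV : (↑C.V : Set ℕ) = ↑A.V ∪ {v, w}) :
    ∃ (A' C' : LStr m n p) (v' w' : ℕ), A'.WF κ ∧ C'.WF κ ∧ A.Sub A' ∧ A'.Sub C' ∧
      v' ∉ A'.V ∧ w' ∉ A'.V ∧ v' ≠ w' ∧ (↑C'.V : Set ℕ) = ↑A'.V ∪ {v', w'} ∧
      -- `C'` is a disjoint amalgam of `A'` and `C` over `A`
      -- (`C` embeds into `C'` over `A` via `v ↦ v'`, `w ↦ w'`):
      (∀ i, ∀ a ∈ A.V, (C.lt i a v ↔ C'.lt i a v') ∧ (C.lt i v a ↔ C'.lt i v' a) ∧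
        (C.lt i a w ↔ C'.lt i a w') ∧ (C.lt i w a ↔ C'.lt i w' a)) ∧
      (∀ i, (C.lt i v w ↔ C'.lt i v' w') ∧ (C.lt i w v ↔ C'.lt i w' v')) ∧
      (∀ j, ∀ a ∈ A.V, (C.E j a v ↔ C'.E j a v') ∧ (C.E j a w ↔ C'.E j a w')) ∧
      (∀ j, (C.E j v w ↔ C'.E j v' w')) ∧
      C'.u v' = C.u v ∧ C'.u w' = C.u w ∧
      -- such that for every `B ⊇ A'` in the class:
      (∀ B : LStr m n p, B.WF κ → A'.Sub B →
        ∀ (σlt τlt : Fin m → Finset ℕ) (σE τE : Fin n → Finset ℕ) (σu τu : Fin p),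
        -- `σ`, `τ` are (realizable) 1-types over `B`:
        (∃ (Bσ : LStr m n p) (x : ℕ), Bσ.WF κ ∧ B.Realizes Bσ x σlt σE σu) →
        (∃ (Bτ : LStr m n p) (x : ℕ), Bτ.WF κ ∧ B.Realizes Bτ x τlt τE τu) →
        -- whose restrictions to `A'` are `tp(v'/A')` resp. `tp(w'/A')`:
        (∀ i, (↑(σlt i) ∩ ↑A'.V : Set ℕ) = {a | a ∈ A'.V ∧ C'.lt i a v'}) →
        (∀ j, (↑(σE j) ∩ ↑A'.V : Set ℕ) = {a | a ∈ A'.V ∧ C'.E j a v'}) →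
        σu = C'.u v' →
        (∀ i, (↑(τlt i) ∩ ↑A'.V : Set ℕ) = {a | a ∈ A'.V ∧ C'.lt i a w'}) →
        (∀ j, (↑(τE j) ∩ ↑A'.V : Set ℕ) = {a | a ∈ A'.V ∧ C'.E j a w'}) →
        τu = C'.u w' →
        -- for any one-point extension `D` of `B` realizing `σ` via `v''`:
        ∀ (D : LStr m n p) (v'' : ℕ), D.WF κ → B.Realizes D v'' σlt σE σu →
        -- there is a one-point extension `E` of `D` by `w''` realizing `τ`
        ∃ (Ex : LStr m n p) (w'' : ℕ), Ex.WF κ ∧ D.Sub Ex ∧ w'' ∉ D.V ∧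
          (↑Ex.V : Set ℕ) = insert w'' ↑D.V ∧
          (∀ i, ∀ b ∈ B.V, Ex.lt i b w'' ↔ b ∈ τlt i) ∧
          (∀ i, ∀ b ∈ B.V, Ex.lt i w'' b ↔ b ∉ τlt i) ∧
          (∀ j, ∀ b ∈ B.V, Ex.E j w'' b ↔ b ∈ τE j) ∧
          Ex.u w'' = τu ∧
          -- with `Ex ↾ (A ∪ {v'', w''}) ≅ C` via the identity on `A`,
          -- `v ↦ v''`, `w ↦ w''`:
          (∀ i, ∀ a ∈ A.V, (Ex.lt i a v'' ↔ C.lt i a v) ∧ (Ex.lt i v'' a ↔ C.lt i v a) ∧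
            (Ex.lt i a w'' ↔ C.lt i a w) ∧ (Ex.lt i w'' a ↔ C.lt i w a)) ∧
          (∀ i, (Ex.lt i v'' w'' ↔ C.lt i v w) ∧ (Ex.lt i w'' v'' ↔ C.lt i w v)) ∧
          (∀ j, ∀ a ∈ A.V, (Ex.E j a v'' ↔ C.E j a v) ∧ (Ex.E j a w'' ↔ C.E j a w)) ∧
          (∀ j, (Ex.E j v'' w'' ↔ C.E j v w)) ∧
          Ex.u v'' = C.u v ∧ Ex.u w'' = C.u w) := by
  classical
  obtain ⟨hirrC, htrC, htotC, hreflC, hsymC, hetrC, hconvC⟩ := id hC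
  have hvC : v ∈ C.V := by
    rw [← Finset.mem_coe, hCV]; right; left; rfl
  have hwC : w ∈ C.V := by
    rw [← Finset.mem_coe, hCV]; right; right; rfl
  have hAC : A.V ⊆ C.V := hsub.1
  obtain ⟨vb, vp, wb, wp, hvbC, hvpC, hwbC, hwpC, hd1, hd2, hd3, hd4, hd5, hd6⟩ :
      ∃ vb vp wb wp : ℕ, vb ∉ C.V ∧ vp ∉ C.V ∧ wb ∉ C.V ∧ wp ∉ C.V ∧
        vb ≠ vp ∧ vb ≠ wb ∧ vb ≠ wp ∧ vp ≠ wb ∧ vp ≠ wp ∧ wb ≠ wp := by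
    refine ⟨C.V.sup id + 1, C.V.sup id + 2, C.V.sup id + 3, C.V.sup id + 4,
      ?_, ?_, ?_, ?_, by omega, by omega, by omega, by omega, by omega, by omega⟩ <;>
    · intro hx
      have := Finset.le_sup (f := id) hx
      simp only [id] at this
      omega
  set π : ℕ → ℕ := fun z => if z = vb ∨ z = vp then v else if z = wb ∨ z = wp then w else z
    with hπ
  have hπvb : π vb = v := by simp [hπ]
  have hπvp : π vp = v := by simp [hπ]
  have hπwb : π wb = w := by simp [hπ, Ne.symm hd2, Ne.symm hd4]
  have hπwp : π wp = w := by simp [hπ, Ne.symm hd3, Ne.symm hd5]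
  have hπC : ∀ a ∈ C.V, π a = a := by
    intro a ha
    have h1 : a ≠ vb := fun h => hvbC (h ▸ ha)
    have h2 : a ≠ vp := fun h => hvpC (h ▸ ha)
    have h3 : a ≠ wb := fun h => hwbC (h ▸ ha)
    have h4 : a ≠ wp := fun h => hwpC (h ▸ ha)
    simp [hπ, h1, h2, h3, h4]
  set C' : LStr m n p := ⟨A.V ∪ {vb, vp, wb, wp},
    fun i a b => C.lt i (π a) (π b) ∨ ((a = vb ∧ b = vp) ∨ (a = wb ∧ b = wp)),
    fun j a b => C.E j (π a) (π b), fun a => C.u (π a)⟩ with hC'def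
  set A' : LStr m n p := ⟨A.V ∪ {vb, wb}, C'.lt, C'.E, C'.u⟩ with hA'def
  have hC'lt : ∀ (i : Fin m) (a b : ℕ), C'.lt i a b ↔
      (C.lt i (π a) (π b) ∨ ((a = vb ∧ b = vp) ∨ (a = wb ∧ b = wp))) :=
    fun _ _ _ => Iff.rfl
  have hC'E : ∀ (j : Fin n) (a b : ℕ), C'.E j a b ↔ C.E j (π a) (π b) :=
    fun _ _ _ => Iff.rfl
  have hC'u : ∀ a, C'.u a = C.u (π a) := fun _ => rfl
  have hC'V : C'.V = A.V ∪ {vb, vp, wb, wp} := rfl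
  have hA'V : A'.V = A.V ∪ {vb, wb} := rfl
  have hA'lt : ∀ (i : Fin m) (a b : ℕ), A'.lt i a b ↔ C'.lt i a b := fun _ _ _ => Iff.rfl
  have hA'E : ∀ (j : Fin n) (a b : ℕ), A'.E j a b ↔ C'.E j a b := fun _ _ _ => Iff.rfl
  have hA'u : ∀ a, A'.u a = C'.u a := fun _ => rfl
  -- membership characterizations
  have hC'mem : ∀ z, z ∈ C'.V ↔ (z ∈ A.V ∨ z = vb ∨ z = vp ∨ z = wb ∨ z = wp) := by
    intro z
    rw [hC'V]
    simp only [Finset.mem_union, Finset.mem_insert, Finset.mem_singleton]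
  have hA'mem : ∀ z, z ∈ A'.V ↔ (z ∈ A.V ∨ z = vb ∨ z = wb) := by
    intro z
    rw [hA'V]
    simp only [Finset.mem_union, Finset.mem_insert, Finset.mem_singleton]
  have hvbA' : vb ∈ A'.V := (hA'mem vb).mpr (Or.inr (Or.inl rfl))
  have hwbA' : wb ∈ A'.V := (hA'mem wb).mpr (Or.inr (Or.inr rfl))
  have hAvb : vb ∉ A.V := fun h => hvbC (hAC h)
  have hAvp : vp ∉ A.V := fun h => hvpC (hAC h)
  have hAwb : wb ∉ A.V := fun h => hwbC (hAC h)
  have hAwp : wp ∉ A.V := fun h => hwpC (hAC h)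
  -- fibers of π on C'.V
  have hfiber : ∀ z ∈ C'.V, (z ∈ A.V ∧ π z = z) ∨ ((z = vb ∨ z = vp) ∧ π z = v) ∨
      ((z = wb ∨ z = wp) ∧ π z = w) := by
    intro z hz
    rcases (hC'mem z).mp hz with h | rfl | rfl | rfl | rfl
    · exact Or.inl ⟨h, hπC z (hAC h)⟩
    · exact Or.inr (Or.inl ⟨Or.inl rfl, hπvb⟩)
    · exact Or.inr (Or.inl ⟨Or.inr rfl, hπvp⟩)
    · exact Or.inr (Or.inr ⟨Or.inl rfl, hπwb⟩)
    · exact Or.inr (Or.inr ⟨Or.inr rfl, hπwp⟩)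
  have hC'WF : C'.WF κ := by
    rw [hC'def]
    refine pullback_WF κ C hC _ π (fun a b => (a = vb ∧ b = vp) ∨ (a = wb ∧ b = wp))
      ?_ ?_ ?_ ?_ ?_
    · intro x hx
      rcases hfiber x hx with ⟨hA0, he⟩ | ⟨_, he⟩ | ⟨_, he⟩
      · rw [he]; exact hAC hA0
      · rw [he]; exact hvC
      · rw [he]; exact hwC
    · rintro x y (⟨rfl, rfl⟩ | ⟨rfl, rfl⟩)
      · rw [hπvb, hπvp]
      · rw [hπwb, hπwp]
    · rintro x y (⟨rfl, rfl⟩ | ⟨rfl, rfl⟩) <;> rintro (⟨h1, h2⟩ | ⟨h1, h2⟩)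
      · exact hd1 h1.symm
      · exact hd4 h1
      · exact hd3 h1.symm
      · exact hd6 h1.symm
    · intro x hx y hy hne hfe
      rcases hfiber x hx with ⟨hxA, hex⟩ | ⟨hx', hex⟩ | ⟨hx', hex⟩ <;>
        rcases hfiber y hy with ⟨hyA, hey⟩ | ⟨hy', hey⟩ | ⟨hy', hey⟩
      · exact absurd (hex ▸ hey ▸ hfe) hne
      · exact absurd (by rw [hex, hey] at hfe; exact hfe ▸ hxA) hv
      · exact absurd (by rw [hex, hey] at hfe; exact hfe ▸ hxA) hw
      · exact absurd (by rw [hex, hey] at hfe; exact hfe.symm ▸ hyA) hv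
      · rcases hx' with rfl | rfl <;> rcases hy' with rfl | rfl
        · exact absurd rfl hne
        · exact Or.inl (Or.inl ⟨rfl, rfl⟩)
        · exact Or.inr (Or.inl ⟨rfl, rfl⟩)
        · exact absurd rfl hne
      · exact absurd (by rw [hex, hey] at hfe; exact hfe) hvw
      · exact absurd (by rw [hex, hey] at hfe; exact hfe.symm ▸ hyA) hw
      · exact absurd (by rw [hex, hey] at hfe; exact hfe.symm) hvw
      · rcases hx' with rfl | rfl <;> rcases hy' with rfl | rfl
        · exact absurd rfl hne
        · exact Or.inl (Or.inr ⟨rfl, rfl⟩)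
        · exact Or.inr (Or.inr ⟨rfl, rfl⟩)
        · exact absurd rfl hne
    · rintro x y z (⟨rfl, rfl⟩ | ⟨rfl, rfl⟩) (⟨h1, h2⟩ | ⟨h1, h2⟩)
      · exact absurd h1.symm hd1
      · exact absurd h1 hd4
      · exact absurd h1.symm hd3
      · exact absurd h1.symm hd6
  have hA'subC'V : A'.V ⊆ C'.V := by
    intro a ha
    rcases (hA'mem a).mp ha with h | h | h
    · exact (hC'mem a).mpr (Or.inl h)
    · exact (hC'mem a).mpr (Or.inr (Or.inl h))
    · exact (hC'mem a).mpr (Or.inr (Or.inr (Or.inr (Or.inl h))))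
  have hA'WF : A'.WF κ := by
    rw [hA'def]
    exact LStr.WF_restrict κ C' hC'WF _ hA'subC'V
  -- basic order facts in C
  have hasym : ∀ i, ∀ x ∈ C.V, ∀ y ∈ C.V, C.lt i x y → ¬ C.lt i y x :=
    fun i x hx y hy h h' => hirrC i x hx (htrC i x hx y hy x hx h h')
  have htotvw : ∀ i, C.lt i v w ∨ C.lt i w v := fun i => htotC i v hvC w hwC hvw
  have hEsymvw : ∀ j, C.E j v w ↔ C.E j w v :=
    fun j => ⟨hsymC j v hvC w hwC, hsymC j w hwC v hvC⟩
  have hnot_v : ∀ i, ∀ a ∈ C.V, a ≠ v → (¬ C.lt i a v ↔ C.lt i v a) := by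
    intro i a ha hne
    constructor
    · intro h
      exact (htotC i a ha v hvC hne).resolve_left h
    · exact fun h h' => hasym i v hvC a ha h h'
  have hnot_w : ∀ i, ∀ a ∈ C.V, a ≠ w → (¬ C.lt i a w ↔ C.lt i w a) := by
    intro i a ha hne
    constructor
    · intro h
      exact (htotC i a ha w hwC hne).resolve_left h
    · exact fun h h' => hasym i w hwC a ha h h'
  have hneC : ∀ a ∈ C.V, a ≠ vb ∧ a ≠ vp ∧ a ≠ wb ∧ a ≠ wp := fun a ha =>
    ⟨fun h => hvbC (h ▸ ha), fun h => hvpC (h ▸ ha),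
     fun h => hwbC (h ▸ ha), fun h => hwpC (h ▸ ha)⟩
  -- computations of C'-relations
  have hlt_avp : ∀ i, ∀ a ∈ C.V, (C'.lt i a vp ↔ C.lt i a v) := by
    intro i a ha
    rw [hC'lt, hπC a ha, hπvp]
    simp [(hneC a ha).1, hd5]
  have hlt_vpa : ∀ i, ∀ a ∈ C.V, (C'.lt i vp a ↔ C.lt i v a) := by
    intro i a ha
    rw [hC'lt, hπC a ha, hπvp]
    simp [Ne.symm hd1, hd4]
  have hlt_awp : ∀ i, ∀ a ∈ C.V, (C'.lt i a wp ↔ C.lt i a w) := by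
    intro i a ha
    rw [hC'lt, hπC a ha, hπwp]
    simp [(hneC a ha).2.2.1, Ne.symm hd5]
  have hlt_wpa : ∀ i, ∀ a ∈ C.V, (C'.lt i wp a ↔ C.lt i w a) := by
    intro i a ha
    rw [hC'lt, hπC a ha, hπwp]
    simp [Ne.symm hd3, Ne.symm hd6]
  have hlt_vpwp : ∀ i, (C'.lt i vp wp ↔ C.lt i v w) := by
    intro i
    rw [hC'lt, hπvp, hπwp]
    simp [Ne.symm hd1, hd4]
  have hlt_wpvp : ∀ i, (C'.lt i wp vp ↔ C.lt i w v) := by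
    intro i
    rw [hC'lt, hπwp, hπvp]
    simp [Ne.symm hd3, Ne.symm hd6]
  have hlt_vbvp : ∀ i, C'.lt i vb vp := fun i =>
    (hC'lt i vb vp).mpr (Or.inr (Or.inl ⟨rfl, rfl⟩))
  have hlt_wbwp : ∀ i, C'.lt i wb wp := fun i =>
    (hC'lt i wb wp).mpr (Or.inr (Or.inr ⟨rfl, rfl⟩))
  have hlt_wbvp : ∀ i, (C'.lt i wb vp ↔ C.lt i w v) := by
    intro i
    rw [hC'lt, hπwb, hπvp]
    simp [Ne.symm hd2, hd5]
  have hlt_vbwp : ∀ i, (C'.lt i vb wp ↔ C.lt i v w) := by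
    intro i
    rw [hC'lt, hπvb, hπwp]
    simp [hd2, Ne.symm hd5]
  have hE_avp : ∀ j, ∀ a ∈ C.V, (C'.E j a vp ↔ C.E j a v) := by
    intro j a ha
    rw [hC'E, hπC a ha, hπvp]
  have hE_awp : ∀ j, ∀ a ∈ C.V, (C'.E j a wp ↔ C.E j a w) := by
    intro j a ha
    rw [hC'E, hπC a ha, hπwp]
  have hE_vpwp : ∀ j, (C'.E j vp wp ↔ C.E j v w) := by
    intro j
    rw [hC'E, hπvp, hπwp]
  have hE_vbvp : ∀ j, C'.E j vb vp := by
    intro j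
    rw [hC'E, hπvb, hπvp]
    exact hreflC j v hvC
  have hE_wbwp : ∀ j, C'.E j wb wp := by
    intro j
    rw [hC'E, hπwb, hπwp]
    exact hreflC j w hwC
  have hE_wbvp : ∀ j, (C'.E j wb vp ↔ C.E j w v) := by
    intro j
    rw [hC'E, hπwb, hπvp]
  have hE_vbwp : ∀ j, (C'.E j vb wp ↔ C.E j v w) := by
    intro j
    rw [hC'E, hπvb, hπwp]
  have hu_vp : C'.u vp = C.u v := by rw [hC'u, hπvp]
  have hu_wp : C'.u wp = C.u w := by rw [hC'u, hπwp]
  refine ⟨A', C', vp, wp, hA'WF, hC'WF, ?_, ?_, ?_, ?_, hd5, ?_, ?_, ?_, ?_, ?_,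
    hu_vp, hu_wp, ?_⟩
  · -- A.Sub A'
    refine ⟨fun a ha => (hA'mem a).mpr (Or.inl ha), ?_, ?_, ?_⟩
    · intro i a ha b hb
      rw [hA'lt, hC'lt, hπC a (hAC ha), hπC b (hAC hb)]
      constructor
      · exact fun h => Or.inl ((hsub.2.1 i a ha b hb).mp h)
      · rintro (h | ⟨rfl, _⟩ | ⟨rfl, _⟩)
        · exact (hsub.2.1 i a ha b hb).mpr h
        · exact absurd ha hAvb
        · exact absurd ha hAwb
    · intro j a ha b hb
      rw [hA'E, hC'E, hπC a (hAC ha), hπC b (hAC hb)]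
      exact hsub.2.2.1 j a ha b hb
    · intro a ha
      rw [hA'u, hC'u, hπC a (hAC ha)]
      exact hsub.2.2.2 a ha
  · -- A'.Sub C'
    exact ⟨hA'subC'V, fun i a _ b _ => hA'lt i a b, fun j a _ b _ => hA'E j a b,
      fun a _ => hA'u a⟩
  · -- vp ∉ A'.V
    intro h
    rcases (hA'mem vp).mp h with h | h | h
    · exact hAvp h
    · exact hd1 h.symm
    · exact hd4 h
  · -- wp ∉ A'.V
    intro h
    rcases (hA'mem wp).mp h with h | h | h
    · exact hAwp h
    · exact hd3 h.symm
    · exact hd6 h.symm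
  · -- V eq
    ext z
    simp only [Finset.mem_coe, Set.mem_union, Set.mem_insert_iff,
      Set.mem_singleton_iff, hC'mem z, hA'mem z]
    tauto
  · -- lt embedding over A
    intro i a ha
    have haC := hAC ha
    exact ⟨(hlt_avp i a haC).symm, (hlt_vpa i a haC).symm, (hlt_awp i a haC).symm,
      (hlt_wpa i a haC).symm⟩
  · -- lt embedding between v w
    exact fun i => ⟨(hlt_vpwp i).symm, (hlt_wpvp i).symm⟩
  · -- E embedding over A
    intro j a ha
    have haC := hAC ha
    exact ⟨(hE_avp j a haC).symm, (hE_awp j a haC).symm⟩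
  · -- E embedding between v w
    exact fun j => (hE_vpwp j).symm
  · -- MAIN
    intro B hB hA'B σlt τlt σE τE σu τu hσex hτex hσltA hσEA hσuA hτltA hτEA hτuA D v2 hDWF hDreal
    clear hσex
    obtain ⟨Bτ, yτ, hBτWF, hBτreal⟩ := hτex
    obtain ⟨Rτ1, Rτ2, Rτ3, Rτ4, Rτ5, Rτ6, Rτ7⟩ :=
      realize_facts κ B Bτ yτ τlt τE τu hBτWF hBτreal
    obtain ⟨Rσ1, Rσ2, Rσ3, Rσ4, Rσ5, Rσ6, Rσ7⟩ :=
      realize_facts κ B D v2 σlt σE σu hDWF hDreal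
    obtain ⟨hirrB, htrB, htotB, hreflB, hsymB, hetrB, hconvB⟩ := id hB
    obtain ⟨hirrD, htrD, htotD, hreflD, hsymD, hetrD, hconvD⟩ := id hDWF
    obtain ⟨hBsubD, hv2B, hDV, hDbv, hDvb, hDEv, hDuv⟩ := hDreal
    obtain ⟨hBDV, hBDlt, hBDE, hBDu⟩ := hBsubD
    have hA'BV : A'.V ⊆ B.V := hA'B.1
    have hvbB : vb ∈ B.V := hA'BV hvbA'
    have hwbB : wb ∈ B.V := hA'BV hwbA'
    have hABV : A.V ⊆ B.V := fun a ha => hA'BV ((hA'mem a).mpr (Or.inl ha))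
    have hv2D : v2 ∈ D.V := by
      rw [← Finset.mem_coe, hDV]
      exact Set.mem_insert _ _
    have hDmem : ∀ z ∈ D.V, z = v2 ∨ z ∈ B.V := by
      intro z hz
      have : (z : ℕ) ∈ (↑D.V : Set ℕ) := hz
      rw [hDV] at this
      simpa using this
    -- pointwise restriction facts
    have hrestr : ∀ (s : Finset ℕ) (P : ℕ → Prop),
        ((↑s ∩ ↑A'.V : Set ℕ) = {a | a ∈ A'.V ∧ P a}) →
        ∀ a ∈ A'.V, (a ∈ s ↔ P a) := by
      intro s P hset a ha
      have h := Set.ext_iff.mp hset a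
      simp only [Set.mem_inter_iff, Finset.mem_coe, Set.mem_setOf_eq] at h
      exact ⟨fun h' => (h.mp ⟨h', ha⟩).2, fun h' => (h.mpr ⟨ha, h'⟩).1⟩
    have hσlt' : ∀ i, ∀ a ∈ A'.V, (a ∈ σlt i ↔ C'.lt i a vp) := fun i =>
      hrestr (σlt i) (fun a => C'.lt i a vp) (hσltA i)
    have hσE' : ∀ j, ∀ a ∈ A'.V, (a ∈ σE j ↔ C'.E j a vp) := fun j =>
      hrestr (σE j) (fun a => C'.E j a vp) (hσEA j)
    have hτlt' : ∀ i, ∀ a ∈ A'.V, (a ∈ τlt i ↔ C'.lt i a wp) := fun i =>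
      hrestr (τlt i) (fun a => C'.lt i a wp) (hτltA i)
    have hτE' : ∀ j, ∀ a ∈ A'.V, (a ∈ τE j ↔ C'.E j a wp) := fun j =>
      hrestr (τE j) (fun a => C'.E j a wp) (hτEA j)
    -- anchor values
    have anc1 : ∀ i, vb ∈ σlt i := fun i => (hσlt' i vb hvbA').mpr (hlt_vbvp i)
    have anc2 : ∀ i, (wb ∈ σlt i ↔ C.lt i w v) := fun i =>
      (hσlt' i wb hwbA').trans (hlt_wbvp i)
    have anc3 : ∀ j, vb ∈ σE j := fun j => (hσE' j vb hvbA').mpr (hE_vbvp j)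
    have anc4 : ∀ j, (wb ∈ σE j ↔ C.E j w v) := fun j =>
      (hσE' j wb hwbA').trans (hE_wbvp j)
    have anc5 : ∀ i, wb ∈ τlt i := fun i => (hτlt' i wb hwbA').mpr (hlt_wbwp i)
    have anc6 : ∀ i, (vb ∈ τlt i ↔ C.lt i v w) := fun i =>
      (hτlt' i vb hvbA').trans (hlt_vbwp i)
    have anc7 : ∀ j, wb ∈ τE j := fun j => (hτE' j wb hwbA').mpr (hE_wbwp j)
    have anc8 : ∀ j, (vb ∈ τE j ↔ C.E j v w) := fun j =>
      (hτE' j vb hvbA').trans (hE_vbwp j)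
    -- symmetric version of the E-realization fact for D
    have hDEv' : ∀ j, ∀ b ∈ B.V, (D.E j b v2 ↔ b ∈ σE j) := by
      intro j b hb
      constructor
      · intro h
        exact (hDEv j b hb).mp (hsymD j b (hBDV hb) v2 hv2D h)
      · intro h
        exact hsymD j v2 hv2D b (hBDV hb) ((hDEv j b hb).mpr h)
    -- cross lemmas between σ and τ
    have X1 : ∀ i, ∀ b ∈ B.V, C.lt i v w → b ∈ σlt i → b ∈ τlt i := by
      intro i b hb h1 h2
      have hwbσ : wb ∉ σlt i := fun h => hasym i v hvC w hwC h1 ((anc2 i).mp h)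
      exact Rτ1 i b hb wb hwbB (anc5 i) (Rσ2 i b hb wb hwbB h2 hwbσ)
    have X2 : ∀ i, ∀ b ∈ B.V, C.lt i w v → b ∈ τlt i → b ∈ σlt i := by
      intro i b hb h1 h2
      have hvbτ : vb ∉ τlt i := fun h => hasym i w hwC v hvC h1 ((anc6 i).mp h)
      exact Rσ1 i b hb vb hvbB (anc1 i) (Rτ2 i b hb vb hvbB h2 hvbτ)
    have X3 : ∀ j, ∀ b ∈ B.V, C.E j v w → b ∈ σE j → b ∈ τE j := by
      intro j b hb h1 h2
      have hBb : B.E j b vb := Rσ4 j b hb vb hvbB h2 (anc3 j)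
      exact Rτ3 j vb hvbB b hb ((anc8 j).mpr h1) (hsymB j b hb vb hvbB hBb)
    have X4 : ∀ j, ∀ b ∈ B.V, C.E j v w → b ∈ τE j → b ∈ σE j := by
      intro j b hb h1 h2
      have hBb : B.E j b vb := Rτ4 j b hb vb hvbB h2 ((anc8 j).mpr h1)
      exact Rσ3 j vb hvbB b hb (anc3 j) (hsymB j b hb vb hvbB hBb)
    have X5 : ∀ j, ∀ b ∈ B.V, b ∈ σE j → b ∈ τE j → C.E j v w := by
      intro j b hb h1 h2
      have hBb : B.E j b vb := Rσ4 j b hb vb hvbB h1 (anc3 j)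
      exact (anc8 j).mp (Rτ3 j b hb vb hvbB h2 hBb)
    -- convexity cross lemmas
    have Y1 : ∀ j, ∀ z ∈ B.V, z ∈ σE j → z ∉ τlt (κ j) → C.lt (κ j) v w → C.E j v w := by
      intro j z hz h1 h2 h3
      have hwbσ : wb ∉ σlt (κ j) := fun h => hasym _ v hvC w hwC h3 ((anc2 _).mp h)
      have hlt1 : B.lt (κ j) wb z := Rτ2 _ wb hwbB z hz (anc5 _) h2
      have h4 : wb ∈ σE j := Rσ6 j z hz wb hwbB h1 hwbσ hlt1
      exact (hEsymvw j).mpr ((anc4 j).mp h4)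
    have Y2 : ∀ j, ∀ x ∈ B.V, x ∈ σE j → x ∈ τlt (κ j) → C.lt (κ j) w v → x ∈ τE j := by
      intro j x hx h1 h2 h3
      by_cases hxwb : x = wb
      · exact hxwb ▸ anc7 j
      · have hwbσ : wb ∈ σlt (κ j) := (anc2 _).mpr h3
        rcases htotB (κ j) x hx wb hwbB hxwb with h | h
        · have hBE : B.E j x wb := Rσ5 j x hx wb hwbB h1 h hwbσ
          exact Rτ3 j wb hwbB x hx (anc7 j) (hsymB j x hx wb hwbB hBE)
        · have hBE : B.E j wb x := Rτ5 j wb hwbB x hx (anc7 j) h h2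
          exact Rτ3 j wb hwbB x hx (anc7 j) hBE
    have Y3 : ∀ j, ∀ z ∈ B.V, C.E j v w → z ∈ σlt (κ j) → z ∉ τlt (κ j) → z ∈ τE j := by
      intro j z hz h1 h2 h3
      have hwv : C.lt (κ j) w v := by
        rcases htotvw (κ j) with h | h
        · exact absurd (X1 _ z hz h h2) h3
        · exact h
      have hwbσE : wb ∈ σE j := (anc4 j).mpr ((hEsymvw j).mp h1)
      by_cases hzwb : z = wb
      · exact hzwb ▸ anc7 j
      · rcases htotB (κ j) z hz wb hwbB hzwb with h | h
        · exact Rτ6 j wb hwbB z hz (anc7 j) h3 h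
        · have hBE : B.E j wb z := Rσ5 j wb hwbB z hz hwbσE h h2
          exact Rτ3 j wb hwbB z hz (anc7 j) hBE
    have Y4 : ∀ j, ∀ y ∈ B.V, y ∈ τE j → y ∉ σlt (κ j) → C.lt (κ j) w v → C.E j v w := by
      intro j y hy h1 h2 h3
      have hvbτ : vb ∉ τlt (κ j) := fun h => hasym _ w hwC v hvC h3 ((anc6 _).mp h)
      have hlt1 : B.lt (κ j) vb y := Rσ2 _ vb hvbB y hy (anc1 _) h2
      exact (anc8 j).mp (Rτ6 j y hy vb hvbB h1 hvbτ hlt1)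
    have Y5 : ∀ j, ∀ z ∈ B.V, C.E j v w → z ∉ σlt (κ j) → z ∈ τlt (κ j) → z ∈ σE j := by
      intro j z hz h1 h2 h3
      have hvw' : C.lt (κ j) v w := by
        rcases htotvw (κ j) with h | h
        · exact h
        · exact absurd (X2 _ z hz h h3) h2
      have hwbσ : wb ∉ σlt (κ j) := fun h => hasym _ v hvC w hwC hvw' ((anc2 _).mp h)
      have hwbσE : wb ∈ σE j := (anc4 j).mpr ((hEsymvw j).mp h1)
      by_cases hzwb : z = wb
      · exact hzwb ▸ hwbσE
      · rcases htotB (κ j) z hz wb hwbB hzwb with h | h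
        · exact Rσ6 j wb hwbB z hz hwbσE h2 h
        · have hBE : B.E j wb z := Rτ5 j wb hwbB z hz (anc7 j) h h3
          exact Rσ3 j wb hwbB z hz hwbσE hBE
    have Y6 : ∀ j, ∀ x ∈ B.V, x ∈ τE j → x ∈ σlt (κ j) → C.lt (κ j) v w → x ∈ σE j := by
      intro j x hx h1 h2 h3
      have hvbτ : vb ∈ τlt (κ j) := (anc6 _).mpr h3
      by_cases hxvb : x = vb
      · exact hxvb ▸ anc3 j
      · rcases htotB (κ j) x hx vb hvbB hxvb with h | h
        · have hBE : B.E j x vb := Rτ5 j x hx vb hvbB h1 h hvbτ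
          exact Rσ3 j vb hvbB x hx (anc3 j) (hsymB j x hx vb hvbB hBE)
        · have hBE : B.E j vb x := Rσ5 j vb hvbB x hx (anc3 j) h h2
          exact Rσ3 j vb hvbB x hx (anc3 j) hBE
    -- fresh point for the new extension
    obtain ⟨w2, hw2D⟩ : ∃ w2, w2 ∉ D.V := by
      refine ⟨D.V.sup id + 1, fun h => ?_⟩
      have := Finset.le_sup (f := id) h
      simp only [id] at this
      omega
    have hv2w2 : v2 ≠ w2 := fun h => hw2D (h ▸ hv2D)
    have hbw2 : ∀ b ∈ B.V, b ≠ w2 := fun b hb h => hw2D (h ▸ hBDV hb)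
    have hbv2 : ∀ b ∈ B.V, b ≠ v2 := fun b hb h => hv2B (h ▸ hb)
    set Lw : Fin m → ℕ → Prop :=
      fun i b => (b = v2 ∧ C.lt i v w) ∨ (b ≠ v2 ∧ b ∈ τlt i) with hLwdef
    set Ew : Fin n → ℕ → Prop :=
      fun j b => (b = v2 ∧ C.E j v w) ∨ (b ≠ v2 ∧ b ∈ τE j) with hEwdef
    have hLwB : ∀ i, ∀ b ∈ B.V, (Lw i b ↔ b ∈ τlt i) := by
      intro i b hb
      simp only [hLwdef]
      constructor
      · rintro (⟨h, _⟩ | ⟨_, h⟩)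
        · exact absurd h (hbv2 b hb)
        · exact h
      · exact fun h => Or.inr ⟨hbv2 b hb, h⟩
    have hLwv2 : ∀ i, (Lw i v2 ↔ C.lt i v w) := by
      intro i
      simp only [hLwdef]
      simp
    have hEwB : ∀ j, ∀ b ∈ B.V, (Ew j b ↔ b ∈ τE j) := by
      intro j b hb
      simp only [hEwdef]
      constructor
      · rintro (⟨h, _⟩ | ⟨_, h⟩)
        · exact absurd h (hbv2 b hb)
        · exact h
      · exact fun h => Or.inr ⟨hbv2 b hb, h⟩
    have hEwv2 : ∀ j, (Ew j v2 ↔ C.E j v w) := by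
      intro j
      simp only [hEwdef]
      simp
    -- the seven coherence conditions
    have k1 : ∀ i, ∀ b ∈ D.V, ∀ c' ∈ D.V, Lw i b → D.lt i c' b → Lw i c' := by
      intro i b hbD c' hcD hLb hcb
      rcases hDmem b hbD with rfl | hbB <;> rcases hDmem c' hcD with rfl | hcB
      · exact absurd hcb (hirrD i _ hv2D)
      · exact (hLwB i c' hcB).mpr
          (X1 i c' hcB ((hLwv2 i).mp hLb) ((hDbv i c' hcB).mp hcb))
      · refine (hLwv2 i).mpr ?_
        rcases htotvw i with h | h
        · exact h
        · exact absurd (X2 i b hbB h ((hLwB i b hbB).mp hLb)) ((hDvb i b hbB).mp hcb)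
      · exact (hLwB i c' hcB).mpr (Rτ1 i c' hcB b hbB ((hLwB i b hbB).mp hLb)
          ((hBDlt i c' hcB b hbB).mpr hcb))
    have k2 : ∀ i, ∀ b ∈ D.V, ∀ c' ∈ D.V, Lw i b → ¬ Lw i c' → D.lt i b c' := by
      intro i b hbD c' hcD hLb hLc
      rcases hDmem b hbD with rfl | hbB <;> rcases hDmem c' hcD with rfl | hcB
      · exact absurd hLb hLc
      · refine (hDvb i c' hcB).mpr fun hc => ?_
        exact hLc ((hLwB i c' hcB).mpr (X1 i c' hcB ((hLwv2 i).mp hLb) hc))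
      · refine (hDbv i b hbB).mpr ?_
        have hwv : C.lt i w v := by
          rcases htotvw i with h | h
          · exact absurd ((hLwv2 i).mpr h) hLc
          · exact h
        exact X2 i b hbB hwv ((hLwB i b hbB).mp hLb)
      · exact (hBDlt i b hbB c' hcB).mp (Rτ2 i b hbB c' hcB ((hLwB i b hbB).mp hLb)
          (fun h => hLc ((hLwB i c' hcB).mpr h)))
    have k3 : ∀ j, ∀ b ∈ D.V, ∀ c' ∈ D.V, Ew j b → D.E j b c' → Ew j c' := by
      intro j b hbD c' hcD hEb hbc
      rcases hDmem b hbD with rfl | hbB <;> rcases hDmem c' hcD with rfl | hcB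
      · exact hEb
      · exact (hEwB j c' hcB).mpr
          (X3 j c' hcB ((hEwv2 j).mp hEb) ((hDEv j c' hcB).mp hbc))
      · exact (hEwv2 j).mpr (X5 j b hbB ((hDEv' j b hbB).mp hbc) ((hEwB j b hbB).mp hEb))
      · exact (hEwB j c' hcB).mpr (Rτ3 j b hbB c' hcB ((hEwB j b hbB).mp hEb)
          ((hBDE j b hbB c' hcB).mpr hbc))
    have k4 : ∀ j, ∀ b ∈ D.V, ∀ c' ∈ D.V, Ew j b → Ew j c' → D.E j b c' := by
      intro j b hbD c' hcD hEb hEc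
      rcases hDmem b hbD with rfl | hbB <;> rcases hDmem c' hcD with rfl | hcB
      · exact hreflD j _ hv2D
      · exact (hDEv j c' hcB).mpr
          (X4 j c' hcB ((hEwv2 j).mp hEb) ((hEwB j c' hcB).mp hEc))
      · exact (hDEv' j b hbB).mpr
          (X4 j b hbB ((hEwv2 j).mp hEc) ((hEwB j b hbB).mp hEb))
      · exact (hBDE j b hbB c' hcB).mp (Rτ4 j b hbB c' hcB ((hEwB j b hbB).mp hEb)
          ((hEwB j c' hcB).mp hEc))
    have k5 : ∀ j, ∀ x ∈ D.V, ∀ y ∈ D.V, D.E j x y → Lw (κ j) x → ¬ Lw (κ j) y →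
        Ew j x := by
      intro j x hxD y hyD hExy hLx hLy
      rcases hDmem x hxD with rfl | hxB <;> rcases hDmem y hyD with rfl | hyB
      · exact absurd hLx hLy
      · refine (hEwv2 j).mpr ?_
        exact Y1 j y hyB ((hDEv j y hyB).mp hExy)
          (fun h => hLy ((hLwB _ y hyB).mpr h)) ((hLwv2 _).mp hLx)
      · refine (hEwB j x hxB).mpr ?_
        have hwv : C.lt (κ j) w v := by
          rcases htotvw (κ j) with h | h
          · exact absurd ((hLwv2 _).mpr h) hLy
          · exact h
        exact Y2 j x hxB ((hDEv' j x hxB).mp hExy) ((hLwB _ x hxB).mp hLx) hwv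
      · refine (hEwB j x hxB).mpr ?_
        exact Rτ7 j x hxB y hyB ((hBDE j x hxB y hyB).mpr hExy)
          ((hLwB _ x hxB).mp hLx) (fun h => hLy ((hLwB _ y hyB).mpr h))
    have k6 : ∀ j, ∀ y ∈ D.V, ∀ z ∈ D.V, Ew j y → ¬ Lw (κ j) z → D.lt (κ j) z y →
        Ew j z := by
      intro j y hyD z hzD hEy hLz hzy
      rcases hDmem y hyD with rfl | hyB <;> rcases hDmem z hzD with rfl | hzB
      · exact hEy
      · refine (hEwB j z hzB).mpr ?_
        exact Y3 j z hzB ((hEwv2 j).mp hEy) ((hDbv _ z hzB).mp hzy)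
          (fun h => hLz ((hLwB _ z hzB).mpr h))
      · refine (hEwv2 j).mpr ?_
        have hwv : C.lt (κ j) w v := by
          rcases htotvw (κ j) with h | h
          · exact absurd ((hLwv2 _).mpr h) hLz
          · exact h
        exact Y4 j y hyB ((hEwB j y hyB).mp hEy) ((hDvb _ y hyB).mp hzy) hwv
      · refine (hEwB j z hzB).mpr ?_
        exact Rτ6 j y hyB z hzB ((hEwB j y hyB).mp hEy)
          (fun h => hLz ((hLwB _ z hzB).mpr h)) ((hBDlt _ z hzB y hyB).mpr hzy)
    have k7 : ∀ j, ∀ x ∈ D.V, ∀ z ∈ D.V, Ew j x → D.lt (κ j) x z → Lw (κ j) z →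
        D.E j x z := by
      intro j x hxD z hzD hEx hxz hLz
      rcases hDmem x hxD with rfl | hxB <;> rcases hDmem z hzD with rfl | hzB
      · exact absurd hxz (hirrD _ _ hv2D)
      · refine (hDEv j z hzB).mpr ?_
        exact Y5 j z hzB ((hEwv2 j).mp hEx) ((hDvb _ z hzB).mp hxz)
          ((hLwB _ z hzB).mp hLz)
      · refine (hDEv' j x hxB).mpr ?_
        exact Y6 j x hxB ((hEwB j x hxB).mp hEx) ((hDbv _ x hxB).mp hxz)
          ((hLwv2 _).mp hLz)
      · exact (hBDE j x hxB z hzB).mp (Rτ5 j x hxB z hzB ((hEwB j x hxB).mp hEx)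
          ((hBDlt _ x hxB z hzB).mpr hxz) ((hLwB _ z hzB).mp hLz))
    refine ⟨D.ext w2 Lw Ew τu, w2,
      LStr.ext_WF κ D w2 Lw Ew τu hDWF hw2D k1 k2 k3 k4 k5 k6 k7,
      LStr.ext_sub D w2 Lw Ew τu hw2D, hw2D, LStr.ext_mem_coe D w2 Lw Ew τu,
      ?_, ?_, ?_, LStr.ext_u_new D w2 Lw Ew τu, ?_, ?_, ?_, ?_, ?_, ?_⟩
    · intro i b hb
      exact (LStr.ext_lt_to D w2 Lw Ew τu (hbw2 b hb)).trans (hLwB i b hb)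
    · intro i b hb
      exact (LStr.ext_lt_from D w2 Lw Ew τu (hbw2 b hb)).trans
        (not_congr (hLwB i b hb))
    · intro j b hb
      exact (LStr.ext_E_from D w2 Lw Ew τu (hbw2 b hb)).trans (hEwB j b hb)
    · -- lt of the copy of C over A
      intro i a ha
      have haB := hABV ha
      have haC := hAC ha
      have haA' : a ∈ A'.V := (hA'mem a).mpr (Or.inl ha)
      have hav : a ≠ v := fun h => hv (h ▸ ha)
      have haw : a ≠ w := fun h => hw (h ▸ ha)
      refine ⟨?_, ?_, ?_, ?_⟩
      · rw [LStr.ext_lt_old D w2 Lw Ew τu (hbw2 a haB) hv2w2, hDbv i a haB,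
          hσlt' i a haA', hlt_avp i a haC]
      · rw [LStr.ext_lt_old D w2 Lw Ew τu hv2w2 (hbw2 a haB), hDvb i a haB,
          ← hnot_v i a haC hav]
        exact not_congr ((hσlt' i a haA').trans (hlt_avp i a haC))
      · rw [LStr.ext_lt_to D w2 Lw Ew τu (hbw2 a haB), hLwB i a haB,
          hτlt' i a haA', hlt_awp i a haC]
      · rw [LStr.ext_lt_from D w2 Lw Ew τu (hbw2 a haB), ← hnot_w i a haC haw]
        exact not_congr ((hLwB i a haB).trans
          ((hτlt' i a haA').trans (hlt_awp i a haC)))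
    · -- lt between the two new points
      intro i
      refine ⟨?_, ?_⟩
      · rw [LStr.ext_lt_to D w2 Lw Ew τu hv2w2]
        exact hLwv2 i
      · rw [LStr.ext_lt_from D w2 Lw Ew τu hv2w2, hLwv2 i]
        exact hnot_w i v hvC hvw
    · -- E of the copy of C over A
      intro j a ha
      have haB := hABV ha
      have haC := hAC ha
      have haA' : a ∈ A'.V := (hA'mem a).mpr (Or.inl ha)
      refine ⟨?_, ?_⟩
      · rw [LStr.ext_E_old D w2 Lw Ew τu (hbw2 a haB) hv2w2, hDEv' j a haB,
          hσE' j a haA', hE_avp j a haC]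
      · rw [LStr.ext_E_to D w2 Lw Ew τu (hbw2 a haB), hEwB j a haB,
          hτE' j a haA', hE_awp j a haC]
    · -- E between the two new points
      intro j
      rw [LStr.ext_E_to D w2 Lw Ew τu hv2w2]
      exact hEwv2 j
    · rw [LStr.ext_u_old D w2 Lw Ew τu hv2w2, hDuv, hσuA, hu_vp]
    · rw [LStr.ext_u_new D w2 Lw Ew τu, hτuA, hu_wp]
end

section
/- Every unrestricted Fraïssé class U_C (the free superposition over each arity i of the class of finite L_i-structures all of whose i-element substructures are isomorphic to a member of a fixed isomorphism-closed universal constraint set C_i) is a Fraïssé class with disjoint amalgamation and satisfies SDAP. -/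
/-!  Unrestricted Fraïssé classes `U_C`.  For each arity `i + 1` (for `i : Fin N`),
`Λ i` is the set of (isomorphism types of) `L_{i+1}`-structures on the domain
`Fin (i+1)`, acted on by `Equiv.Perm (Fin (i+1))` (relabeling); a structure on a
finite vertex set assigns to each strictly increasing `(i+1)`-tuple of its
vertices a label in `Λ i`, and `U_C` consists of the structures all of whose
labels lie in the isomorphism-closed universal constraint set `C i ⊆ Λ i`.
(`U_C` is the free superposition over the arities.)  We show `U_C` is a Fraïssé
class with disjoint amalgamation satisfying SDAP. -/

/-- A finite structure in the free superposition: a labeling of the increasing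
tuples of each arity. -/
structure URStr (N : ℕ) (Λ : Fin N → Type) where
  V : Finset ℕ
  lab : ∀ i : Fin N, (Fin (i.1 + 1) → ℕ) → Λ i

variable {N : ℕ} {Λ : Fin N → Type}

/-- `S` belongs to the class `U_C` determined by the universal constraint sets
`C i`: the structure induced on every `(i+1)`-element subset is (isomorphic to)
a member of `C i`. -/
def InUC (C : ∀ i : Fin N, Set (Λ i)) (S : URStr N Λ) : Prop :=
  ∀ (i : Fin N) (e : Fin (i.1 + 1) → ℕ), StrictMono e → (∀ k, e k ∈ S.V) →
    S.lab i e ∈ C i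

/-- `S` is a substructure of `T`. -/
def URStr.Sub (S T : URStr N Λ) : Prop :=
  S.V ⊆ T.V ∧ ∀ (i : Fin N) (e : Fin (i.1 + 1) → ℕ), StrictMono e →
    (∀ k, e k ∈ S.V) → S.lab i e = T.lab i e

/-- An embedding of `S` into `T` (order-preserving representation). -/
def URStr.Emb (f : ℕ → ℕ) (S T : URStr N Λ) : Prop :=
  StrictMonoOn f ↑S.V ∧ (∀ x ∈ S.V, f x ∈ T.V) ∧
  ∀ (i : Fin N) (e : Fin (i.1 + 1) → ℕ), StrictMono e → (∀ k, e k ∈ S.V) →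
    T.lab i (f ∘ e) = S.lab i e

/-- The structures `X` (at `x` over `W`) and `Y` (at `y` over `W`) agree: the
labels of tuples from `W ∪ {x}` match those of the corresponding tuples from
`W ∪ {y}` under `x ↦ y`. -/
def TypeMatch (X : URStr N Λ) (x : ℕ) (Y : URStr N Λ) (y : ℕ) (W : Finset ℕ) : Prop :=
  ∀ (i : Fin N) (e : Fin (i.1 + 1) → ℕ), StrictMono e → (∀ k, e k ∈ W ∨ e k = x) →
    X.lab i e = Y.lab i (fun k => if e k = x then y else e k)

/-!
Membership in `U_C` is a condition on each tuple separately, so gluing members of `U_C` that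
agree wherever they overlap, and giving every tuple that lies in no single piece an arbitrary
label from `C i`, stays inside `U_C` (free amalgamation). Joint embedding and disjoint
amalgamation are such free amalgams, after shifting one structure to make the vertex sets
disjoint. SDAP holds with `A' = A` and `C' = C`: the extension `E` of `D` is the free amalgam of
`D`, a copy of `Bτ` realizing `τ` at a new top vertex `w''`, and a copy of `C` placed on
`A ∪ {v'', w''}`. These pieces agree on their overlaps because `σ` and `τ` restrict over `A` to the
types of `v` and `w` in `C`.
-/

theorem StrictMonoOn.strictMono_invFunOn_comp {α β ι : Type*} [LinearOrder α] [Nonempty α]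
    [Preorder β] [Preorder ι] {f : α → β} {s : Set α} (hf : StrictMonoOn f s) {e : ι → β}
    (he : StrictMono e) (hes : ∀ k, e k ∈ f '' s) :
    StrictMono (Function.invFunOn f s ∘ e) := by
  intro j k hjk
  have hmem : ∀ k, Function.invFunOn f s (e k) ∈ s := fun k => Function.invFunOn_mem (hes k)
  rw [Function.comp_apply, Function.comp_apply, ← hf.lt_iff_lt (hmem j) (hmem k),
    Function.invFunOn_eq (hes j), Function.invFunOn_eq (hes k)]
  exact he hjk

theorem strictMonoOn_update_of_lt {W : Set ℕ} {x y : ℕ} (hx : ∀ a ∈ W, a < x)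
    (hy : ∀ a ∈ W, a < y) :
    StrictMonoOn (fun z => if z = x then y else z) {z | z ∈ W ∨ z = x} := by
  rintro a (ha | rfl) b (hb | rfl) hab <;>
    simp only <;> grind

theorem strictMonoOn_update₂_of_lt {W : Set ℕ} {x y x' y' : ℕ} (hx : ∀ a ∈ W, a < x)
    (hx' : ∀ a ∈ W, a < x') (hxy : x < y) (hxy' : x' < y') :
    StrictMonoOn (fun z => if z = x then x' else if z = y then y' else z)
      {z | z ∈ W ∨ z = x ∨ z = y} := by
  rintro a (ha | rfl | rfl) b (hb | rfl | rfl) hab <;>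
    simp only <;> grind

namespace URStr

def PreservesLabels (f : ℕ → ℕ) (W : Set ℕ) (S T : URStr N Λ) : Prop :=
  ∀ (i : Fin N) (e : Fin (i.1 + 1) → ℕ), StrictMono e → (∀ k, e k ∈ W) →
    S.lab i e = T.lab i (f ∘ e)

def Compatible (S T : URStr N Λ) : Prop :=
  ∀ (i : Fin N) (e : Fin (i.1 + 1) → ℕ), StrictMono e → (∀ k, e k ∈ S.V) →
    (∀ k, e k ∈ T.V) → S.lab i e = T.lab i e

noncomputable def map (S : URStr N Λ) (f : ℕ → ℕ) : URStr N Λ where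
  V := S.V.image f
  lab i e := S.lab i (Function.invFunOn f S.V ∘ e)

/-- The free amalgam of the pieces `Ss`; where pieces overlap, the earlier one wins. -/
def glue (d : ∀ i, Λ i) : List (URStr N Λ) → URStr N Λ
  | [] => ⟨∅, fun i _ => d i⟩
  | S :: Ss => ⟨S.V ∪ (glue d Ss).V,
      fun i e => if ∀ k, e k ∈ S.V then S.lab i e else (glue d Ss).lab i e⟩

variable {C : ∀ i : Fin N, Set (Λ i)} {f g : ℕ → ℕ} {W W' : Set ℕ} {A B R S T U X Y : URStr N Λ}

theorem mem_map_V {x : ℕ} : x ∈ (S.map f).V ↔ ∃ y ∈ S.V, f y = x := Finset.mem_image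

theorem coe_map_V : (↑(S.map f).V : Set ℕ) = f '' S.V := Finset.coe_image

theorem Sub.preservesLabels (h : S.Sub T) : PreservesLabels id S.V S T := h.2

theorem mapsTo_map : Set.MapsTo f S.V (S.map f).V := fun _ hx => Finset.mem_image_of_mem f hx

theorem _root_.TypeMatch.preservesLabels {x y : ℕ} {W : Finset ℕ} (h : TypeMatch X x Y y W) :
    PreservesLabels (fun z => if z = x then y else z) {z | z ∈ W ∨ z = x} X Y := h

theorem PreservesLabels.comp (hg : PreservesLabels g W' T U) (hf : PreservesLabels f W S T)
    (hmono : StrictMonoOn f W) (hmaps : Set.MapsTo f W W') :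
    PreservesLabels (g ∘ f) W S U := fun i e he hW =>
  (hf i e he hW).trans <|
    hg i (f ∘ e) (fun _ _ hjk => hmono (hW _) (hW _) (he hjk)) fun k => hmaps (hW k)

theorem PreservesLabels.congr (h : PreservesLabels f W S T) (hfg : Set.EqOn f g W) :
    PreservesLabels g W S T := by
  intro i e he hW
  rw [h i e he hW]
  congr 1
  funext k
  exact hfg (hW k)

theorem preservesLabels_id_of_sub (hS : R.Sub S) (hT : R.Sub T) :
    PreservesLabels id R.V S T := fun i e he hW =>
  (hS.2 i e he hW).symm.trans (hT.2 i e he hW)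

theorem Compatible.of_preservesLabels_id (h : PreservesLabels id W S T)
    (hW : (↑S.V ∩ ↑T.V : Set ℕ) ⊆ W) : Compatible S T := fun i e he hS hT =>
  h i e he fun k => hW ⟨hS k, hT k⟩

theorem preservesLabels_map (hf : Set.InjOn f S.V) : PreservesLabels f S.V S (S.map f) := by
  intro i e he hW
  change _ = S.lab i (Function.invFunOn f S.V ∘ f ∘ e)
  congr 1
  funext k
  exact (hf.leftInvOn_invFunOn (hW k)).symm

theorem inUC_map (hf : StrictMonoOn f S.V) (hS : InUC C S) : InUC C (S.map f) := by
  intro i e he hV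
  have hes : ∀ k, e k ∈ f '' S.V := fun k => coe_map_V ▸ hV k
  exact hS i _ (hf.strictMono_invFunOn_comp he hes) fun k => Function.invFunOn_mem (hes k)

theorem compatible_map (hf : StrictMonoOn f S.V) (hW : ∀ x ∈ S.V, f x ∈ X.V → x ∈ W)
    (h : PreservesLabels f W S X) : Compatible X (S.map f) := by
  intro i e he hX hV
  have hes : ∀ k, e k ∈ f '' S.V := fun k => coe_map_V ▸ hV k
  have hback : f ∘ (Function.invFunOn f S.V ∘ e) = e :=
    funext fun k => Function.invFunOn_eq (hes k)
  have hmem : ∀ k, Function.invFunOn f S.V (e k) ∈ S.V := fun k => Function.invFunOn_mem (hes k)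
  refine (h i _ (hf.strictMono_invFunOn_comp he hes) fun k => ?_).trans ?_ |>.symm
  · exact hW _ (hmem k) (Function.invFunOn_eq (hes k) ▸ hX k)
  · rw [hback]

theorem glue_lab_mem {d : ∀ i, Λ i} (hd : ∀ i, d i ∈ C i) {Ss : List (URStr N Λ)}
    (hSs : ∀ S ∈ Ss, InUC C S) (i : Fin N) {e : Fin (i.1 + 1) → ℕ} (he : StrictMono e) :
    (glue d Ss).lab i e ∈ C i := by
  induction Ss with
  | nil => exact hd i
  | cons S Ss ih =>
    simp only [glue]
    split_ifs with hS
    · exact hSs S (List.mem_cons_self ..) i e he hS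
    · exact ih fun T hT => hSs T (List.mem_cons_of_mem _ hT)

theorem inUC_glue {d : ∀ i, Λ i} (hd : ∀ i, d i ∈ C i) {Ss : List (URStr N Λ)}
    (hSs : ∀ S ∈ Ss, InUC C S) : InUC C (glue d Ss) := fun i _ he _ =>
  glue_lab_mem hd hSs i he

theorem sub_glue (d : ∀ i, Λ i) {Ss : List (URStr N Λ)} (hSs : Ss.Pairwise Compatible)
    (hS : S ∈ Ss) : S.Sub (glue d Ss) := by
  induction Ss with
  | nil => simp at hS
  | cons T Ss ih =>
    rw [List.pairwise_cons] at hSs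
    refine ⟨?_, fun i e he hW => ?_⟩
    · rcases List.mem_cons.1 hS with rfl | hS
      · exact Finset.subset_union_left
      · exact (ih hSs.2 hS).1.trans Finset.subset_union_right
    · simp only [glue]
      rcases List.mem_cons.1 hS with rfl | hS
      · rw [if_pos hW]
      split_ifs with hT
      · exact (hSs.1 S hS i e he hT hW).symm
      · exact (ih hSs.2 hS).2 i e he hW

theorem _root_.InUC.of_sub (hT : InUC C T) (hST : S.Sub T) : InUC C S := fun i e he hW =>
  hST.2 i e he hW ▸ hT i e he fun k => hST.1 (hW k)

theorem Sub.refl (S : URStr N Λ) : S.Sub S := ⟨subset_rfl, fun _ _ _ _ => rfl⟩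

theorem Sub.emb_id (h : S.Sub T) : Emb id S T :=
  ⟨strictMonoOn_id, h.1, fun i e he hW => (h.2 i e he hW).symm⟩

theorem emb_of_map_sub (hf : StrictMonoOn f S.V) (h : (S.map f).Sub T) : Emb f S T := by
  refine ⟨hf, fun x hx => h.1 (mapsTo_map hx), fun i e he hW => ?_⟩
  rw [preservesLabels_map hf.injOn i e he hW]
  exact (h.2 i _ (fun _ _ hjk => hf (hW _) (hW _) (he hjk))
    fun k => mapsTo_map (hW k)).symm

theorem exists_joint_embedding {d : ∀ i, Λ i} (hd : ∀ i, d i ∈ C i) (hA : InUC C A)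
    (hB : InUC C B) :
    ∃ (D : URStr N Λ) (f g : ℕ → ℕ), InUC C D ∧ Emb f A D ∧ Emb g B D := by
  set M := A.V.sup id + 1
  have hM : ∀ a ∈ A.V, a < M := fun a ha => Nat.lt_succ_of_le (Finset.le_sup (f := id) ha)
  have hshift : StrictMonoOn (· + M) B.V := fun x _ y _ h => Nat.add_lt_add_right h M
  have hdisj : Compatible A (B.map (· + M)) :=
    compatible_map (W := ∅) hshift (fun x _ hx => absurd (hM _ hx) (by omega))
      fun _ _ _ hW => absurd (hW 0) id
  have hpair : [A, B.map (· + M)].Pairwise Compatible := by simpa using hdisj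
  refine ⟨glue d [A, B.map (· + M)], id, (· + M), ?_, ?_, ?_⟩
  · exact inUC_glue hd (by simpa using ⟨hA, inUC_map hshift hB⟩)
  · exact (sub_glue d hpair (by simp)).emb_id
  · exact emb_of_map_sub hshift (sub_glue d hpair (by simp))

theorem exists_disjoint_amalgam {d : ∀ i, Λ i} (hd : ∀ i, d i ∈ C i) {A B B' : URStr N Λ}
    (hB : InUC C B) (hB' : InUC C B') (hAB : A.Sub B) (hAB' : A.Sub B')
    (hinter : (↑B.V ∩ ↑B'.V : Set ℕ) = ↑A.V) :
    ∃ D : URStr N Λ, InUC C D ∧ B.Sub D ∧ B'.Sub D ∧ D.V = B.V ∪ B'.V := by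
  have hpair : [B, B'].Pairwise Compatible := by
    simpa using Compatible.of_preservesLabels_id (preservesLabels_id_of_sub hAB hAB')
      hinter.subset
  refine ⟨glue d [B, B'], inUC_glue hd (by simpa using ⟨hB, hB'⟩), sub_glue d hpair (by simp),
    sub_glue d hpair (by simp), by simp [glue]⟩

theorem _root_.TypeMatch.trans {Z : URStr N Λ} {x y z : ℕ} {W W' : Finset ℕ}
    (h₁ : TypeMatch X x Y y W) (h₂ : TypeMatch Y y Z z W') (hWW' : W ⊆ W')
    (hx : ∀ a ∈ W, a < x) (hy : ∀ a ∈ W, a < y) : TypeMatch X x Z z W := by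
  refine (h₂.preservesLabels.comp h₁.preservesLabels (strictMonoOn_update_of_lt hx hy) ?_).congr
    (g := fun a => if a = x then z else a) ?_
  · rintro a (ha | rfl)
    · simp [(hx a ha).ne, hWW' ha]
    · simp
  · rintro a (ha | rfl)
    · simp [(hx a ha).ne, (hy a ha).ne]
    · simp

theorem typeMatch_of_map_sub {x y : ℕ} {W : Finset ℕ} (hV : (↑X.V : Set ℕ) = insert x ↑W)
    (hf : StrictMonoOn (fun z => if z = x then y else z) X.V)
    (hZ : (X.map fun z => if z = x then y else z).Sub Z) : TypeMatch X x Z y W := by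
  have h := hZ.preservesLabels.comp (preservesLabels_map hf.injOn) hf mapsTo_map
  rwa [hV, show insert x (W : Set ℕ) = {z | z ∈ W ∨ z = x} by ext; simp [or_comm]] at h

theorem compatible_map_of_sub (hf : StrictMonoOn f S.V) (hRS : R.Sub S) (hRX : R.Sub X)
    (hfR : ∀ a ∈ R.V, f a = a) (hXS : ∀ z ∈ S.V, f z ∈ X.V → z ∈ R.V) :
    Compatible X (S.map f) :=
  compatible_map hf hXS ((preservesLabels_id_of_sub hRS hRX).congr fun a ha => (hfR a ha).symm)

theorem compatible_map_of_typeMatch {x y : ℕ} {W : Finset ℕ} (hf : StrictMonoOn f S.V)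
    (h : TypeMatch S x X y W) (hxW : x ∉ W) (hfx : f x = y) (hfW : ∀ a ∈ W, f a = a)
    (hXS : ∀ z ∈ S.V, f z ∈ X.V → z ∈ W ∨ z = x) : Compatible X (S.map f) := by
  refine compatible_map hf hXS (h.preservesLabels.congr ?_)
  rintro a (ha | rfl)
  · simp [hfW a ha, show a ≠ x from fun h => hxW (h ▸ ha)]
  · simp [hfx]

theorem pairwise_compatible_extension_pieces {A B Cst Bσ Bτ D : URStr N Λ}
    {v w vσ wτ v'' w'' : ℕ}
    (hfτ : StrictMonoOn (fun z => if z = wτ then w'' else z) Bτ.V)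
    (hfC : StrictMonoOn (fun z => if z = v then v'' else if z = w then w'' else z) Cst.V)
    (hvw : v < w) (hAv : ∀ a ∈ A.V, a < v)
    (hCstV : (↑Cst.V : Set ℕ) = {z | z ∈ A.V ∨ z = v ∨ z = w})
    (hAB : A.V ⊆ B.V) (hBBτ : B.Sub Bτ) (hBD : B.Sub D)
    (hBvσ : ∀ b ∈ B.V, b < vσ) (hBwτ : ∀ b ∈ B.V, b < wτ) (hBv'' : ∀ b ∈ B.V, b < v'')
    (hv''w'' : v'' < w'') (hw''D : w'' ∉ D.V) (hBτV : (↑Bτ.V : Set ℕ) = insert wτ ↑B.V)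
    (hσ : TypeMatch Cst v Bσ vσ A.V) (hτ : TypeMatch Cst w Bτ wτ A.V)
    (hσD : TypeMatch Bσ vσ D v'' B.V) :
    [D, Bτ.map (fun z => if z = wτ then w'' else z),
      Cst.map (fun z => if z = v then v'' else if z = w then w'' else z)].Pairwise Compatible := by
  have hAw : ∀ a ∈ A.V, a < w := fun a ha => (hAv a ha).trans hvw
  have hfCA : ∀ a ∈ A.V, (if a = v then v'' else if a = w then w'' else a) = a := fun a ha => by
    simp [(hAv a ha).ne, (hAw a ha).ne]
  have hBτ' : ∀ x, x ∈ Bτ.V ↔ x = wτ ∨ x ∈ B.V := fun x => by simpa using Set.ext_iff.1 hBτV x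
  have hDBτ : Compatible D (Bτ.map fun z => if z = wτ then w'' else z) := by
    refine compatible_map_of_sub hfτ hBBτ hBD (fun b hb => if_neg (hBwτ b hb).ne)
      fun x hx hxD => ?_
    rcases (hBτ' x).1 hx with rfl | hx
    · simp [hw''D] at hxD
    · exact hx
  have hDC : Compatible D (Cst.map fun z => if z = v then v'' else if z = w then w'' else z) := by
    refine compatible_map_of_typeMatch hfC (hσ.trans hσD hAB hAv fun a ha => hBvσ a (hAB ha))
      (fun h => (hAv v h).false) (if_pos rfl) hfCA fun x hx hxD => ?_
    rcases hCstV.subset (Finset.mem_coe.2 hx) with hx | rfl | rfl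
    · exact Or.inl hx
    · exact Or.inr rfl
    · simp [hvw.ne', hw''D] at hxD
  have hBτC : Compatible (Bτ.map fun z => if z = wτ then w'' else z)
      (Cst.map fun z => if z = v then v'' else if z = w then w'' else z) := by
    refine compatible_map_of_typeMatch hfC
      (hτ.trans (typeMatch_of_map_sub hBτV hfτ (Sub.refl _)) hAB hAw fun a ha => hBwτ a (hAB ha))
      (fun h => (hAw w h).false) (by simp [hvw.ne']) hfCA fun x hx hxD => ?_
    rcases hCstV.subset (Finset.mem_coe.2 hx) with hx | rfl | rfl
    · exact Or.inl hx
    · obtain ⟨y, hy, hyv⟩ := mem_map_V.1 hxD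
      rcases (hBτ' y).1 hy with rfl | hy
      · simp only [if_pos] at hyv
        omega
      · have := hBv'' y hy
        have := hBwτ y hy
        simp only [if_pos] at hyv
        split_ifs at hyv <;> omega
    · exact Or.inr rfl
  simpa using ⟨⟨hDBτ, hDC⟩, hBτC⟩

theorem exists_extension_realizing_type_with_copy {d : ∀ i, Λ i} (hd : ∀ i, d i ∈ C i)
    {A B Cst Bσ Bτ D : URStr N Λ} {v w vσ wτ v'' : ℕ}
    (hCst : InUC C Cst) (hBτ : InUC C Bτ) (hD : InUC C D)
    (hvw : v < w) (hAv : ∀ a ∈ A.V, a < v) (hCstV : (↑Cst.V : Set ℕ) = ↑A.V ∪ {v, w})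
    (hAB : A.V ⊆ B.V) (hBBτ : B.Sub Bτ) (hBD : B.Sub D)
    (hBvσ : ∀ b ∈ B.V, b < vσ) (hBwτ : ∀ b ∈ B.V, b < wτ) (hBv'' : ∀ b ∈ B.V, b < v'')
    (hBτV : (↑Bτ.V : Set ℕ) = insert wτ ↑B.V) (hDV : (↑D.V : Set ℕ) = insert v'' ↑B.V)
    (hσ : TypeMatch Cst v Bσ vσ A.V) (hτ : TypeMatch Cst w Bτ wτ A.V)
    (hσD : TypeMatch Bσ vσ D v'' B.V) :
    ∃ (E : URStr N Λ) (w'' : ℕ), InUC C E ∧ D.Sub E ∧ w'' ∉ D.V ∧ v'' < w'' ∧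
      (↑E.V : Set ℕ) = insert w'' ↑D.V ∧ TypeMatch Bτ wτ E w'' B.V ∧
      PreservesLabels (fun z => if z = v then v'' else if z = w then w'' else z)
        {z | z ∈ A.V ∨ z = v ∨ z = w} Cst E := by
  set w'' := v'' + 1
  set fτ : ℕ → ℕ := fun z => if z = wτ then w'' else z
  set fC : ℕ → ℕ := fun z => if z = v then v'' else if z = w then w'' else z
  have hAv'' : ∀ a ∈ A.V, a < v'' := fun a ha => hBv'' a (hAB ha)
  have hCstV' : (↑Cst.V : Set ℕ) = {z | z ∈ A.V ∨ z = v ∨ z = w} := by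
    rw [hCstV]; ext; simp only [Set.mem_union, Finset.mem_coe, Set.mem_insert_iff,
      Set.mem_singleton_iff, Set.mem_ofPred_eq]
  have hfτ : StrictMonoOn fτ Bτ.V := by
    refine (strictMonoOn_update_of_lt hBwτ fun b hb => (hBv'' b hb).trans (lt_add_one _)).mono ?_
    rw [hBτV]
    rintro x (rfl | hx)
    exacts [Or.inr rfl, Or.inl hx]
  have hfC : StrictMonoOn fC Cst.V :=
    hCstV' ▸ strictMonoOn_update₂_of_lt hAv hAv'' hvw (lt_add_one _)
  have hw''D : w'' ∉ D.V := fun h => by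
    rcases (Set.ext_iff.1 hDV w'').1 h with h | h
    · omega
    · exact absurd (hBv'' _ h) (by omega)
  have hpair := pairwise_compatible_extension_pieces hfτ hfC hvw hAv hCstV' hAB hBBτ hBD hBvσ hBwτ
    hBv'' (lt_add_one v'') hw''D hBτV hσ hτ hσD
  set E := glue d [D, Bτ.map fτ, Cst.map fC]
  have hBτE : (Bτ.map fτ).Sub E := sub_glue d hpair (by simp)
  have hCstE : (Cst.map fC).Sub E := sub_glue d hpair (by simp)
  refine ⟨E, w'', inUC_glue hd (by simpa using ⟨hD, inUC_map hfτ hBτ, inUC_map hfC hCst⟩),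
    sub_glue d hpair (List.mem_cons_self ..), hw''D, lt_add_one _, ?_,
    typeMatch_of_map_sub hBτV hfτ hBτE, ?_⟩
  · ext x
    simp only [E, glue, Finset.coe_union, coe_map_V, hBτV, hCstV', hDV, Finset.coe_empty,
      Set.union_empty]
    constructor
    · rintro (h | ⟨y, rfl | hy, rfl⟩ | ⟨y, hy | rfl | rfl, rfl⟩)
      · exact Or.inr h
      · exact Or.inl (if_pos rfl)
      · exact Or.inr (Or.inr (by simp [fτ, (hBwτ y hy).ne, hy]))
      · exact Or.inr (Or.inr (by simp [fC, (hAv y hy).ne, ((hAv y hy).trans hvw).ne, hAB hy]))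
      · exact Or.inr (Or.inl (by simp [fC]))
      · exact Or.inl (by simp [fC, hvw.ne'])
    · rintro (rfl | h)
      · exact Or.inr (Or.inl ⟨wτ, Set.mem_insert _ _, if_pos rfl⟩)
      · exact Or.inl h
  · have h := hCstE.preservesLabels.comp (preservesLabels_map hfC.injOn) hfC mapsTo_map
    rwa [hCstV'] at h

end URStr

theorem unrestricted_class_is_fraisse_with_disjoint_amalgamation_and_SDAP_general
    (C : ∀ i : Fin N, Set (Λ i))
    (hCne : ∀ i, (C i).Nonempty) :
    -- `U_C` is hereditary:
    (∀ S T : URStr N Λ, InUC C T → S.Sub T → InUC C S) ∧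
    -- has the joint embedding property:
    (∀ A B : URStr N Λ, InUC C A → InUC C B →
      ∃ (D : URStr N Λ) (f g : ℕ → ℕ), InUC C D ∧
        URStr.Emb f A D ∧ URStr.Emb g B D) ∧
    -- has disjoint amalgamation:
    (∀ A B B' : URStr N Λ, InUC C A → InUC C B → InUC C B' →
      A.Sub B → A.Sub B' → (↑B.V ∩ ↑B'.V : Set ℕ) = ↑A.V →
      ∃ D : URStr N Λ, InUC C D ∧ B.Sub D ∧ B'.Sub D ∧ D.V = B.V ∪ B'.V) ∧
    -- and satisfies SDAP:
    (∀ A Cst : URStr N Λ, InUC C A → InUC C Cst → A.Sub Cst →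
      ∀ v w : ℕ, v ∉ A.V → w ∉ A.V → v < w → (∀ a ∈ A.V, a < v) →
      (↑Cst.V : Set ℕ) = ↑A.V ∪ {v, w} →
      ∃ (A' C' : URStr N Λ) (v' w' : ℕ), InUC C A' ∧ InUC C C' ∧
        A.Sub A' ∧ A'.Sub C' ∧ v' ∉ A'.V ∧ w' ∉ A'.V ∧ v' < w' ∧
        (∀ a ∈ A'.V, a < v') ∧ (↑C'.V : Set ℕ) = ↑A'.V ∪ {v', w'} ∧
        -- `C'` is a disjoint amalgam of `A'` and `C` over `A`:
        (∀ (i : Fin N) (e : Fin (i.1 + 1) → ℕ), StrictMono e →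
          (∀ k, e k ∈ A.V ∨ e k = v ∨ e k = w) →
          Cst.lab i e = C'.lab i
            (fun k => if e k = v then v' else if e k = w then w' else e k)) ∧
        -- such that for all `B ⊇ A'` in `U_C`:
        (∀ B : URStr N Λ, InUC C B → A'.Sub B →
         -- all 1-types `σ`, `τ` over `B`, presented by one-point extensions
         -- `Bσ = B ∪ {vσ}`, `Bτ = B ∪ {wτ}` in `U_C`:
         ∀ (Bσ Bτ : URStr N Λ) (vσ wτ : ℕ), InUC C Bσ → InUC C Bτ →
           B.Sub Bσ → B.Sub Bτ → vσ ∉ B.V → wτ ∉ B.V →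
           (∀ b ∈ B.V, b < vσ) → (∀ b ∈ B.V, b < wτ) →
           (↑Bσ.V : Set ℕ) = insert vσ ↑B.V → (↑Bτ.V : Set ℕ) = insert wτ ↑B.V →
           -- with `σ ↾ A' = tp(v'/A')` and `τ ↾ A' = tp(w'/A')`:
           TypeMatch C' v' Bσ vσ A'.V → TypeMatch C' w' Bτ wτ A'.V →
           -- for any one-point extension `D` of `B` in `U_C` realizing `σ`:
           ∀ (D : URStr N Λ) (v'' : ℕ), InUC C D → B.Sub D → v'' ∉ B.V →
             (∀ b ∈ B.V, b < v'') → (↑D.V : Set ℕ) = insert v'' ↑B.V →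
             TypeMatch Bσ vσ D v'' B.V →
           -- there is a one-point extension `E` of `D` in `U_C` realizing `τ`
           ∃ (E : URStr N Λ) (w'' : ℕ), InUC C E ∧ D.Sub E ∧ w'' ∉ D.V ∧
             v'' < w'' ∧ (↑E.V : Set ℕ) = insert w'' ↑D.V ∧
             TypeMatch Bτ wτ E w'' B.V ∧
             -- with `E ↾ (A ∪ {v'', w''}) ≅ Cst`:
             (∀ (i : Fin N) (e : Fin (i.1 + 1) → ℕ), StrictMono e →
               (∀ k, e k ∈ A.V ∨ e k = v ∨ e k = w) →
               Cst.lab i e = E.lab i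
                 (fun k => if e k = v then v'' else if e k = w then w'' else e k)))) := by
  choose d hd using hCne
  refine ⟨fun S T hT hST => hT.of_sub hST, fun A B hA hB => URStr.exists_joint_embedding hd hA hB,
    fun A B B' _ hB hB' hAB hAB' hinter => URStr.exists_disjoint_amalgam hd hB hB' hAB hAB' hinter,
    fun A Cst hA hCst hACst v w hv hw hvw hAv hCstV => ?_⟩
  refine ⟨A, Cst, v, w, hA, hCst, URStr.Sub.refl A, hACst, hv, hw, hvw, hAv, hCstV,
    fun i e he hW => ?_, fun B _ hAB Bσ Bτ vσ wτ _ hBτ _ hBBτ _ _ hBvσ hBwτ _ hBτV hσ hτ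
      D v'' hD hBD _ hBv'' hDV hσD => URStr.exists_extension_realizing_type_with_copy hd hCst hBτ
        hD hvw hAv hCstV hAB.1 hBBτ hBD hBvσ hBwτ hBv'' hBτV hDV hσ hτ hσD⟩
  congr 1
  funext k
  rcases hW k with h | h | h
  · simp [(hAv _ h).ne, ((hAv _ h).trans hvw).ne]
  · simp [h]
  · simp [h, hvw.ne']

theorem unrestricted_class_is_fraisse_with_disjoint_amalgamation_and_SDAP
    (C : ∀ i : Fin N, Set (Λ i))
    -- the universal constraint sets are closed under isomorphism (relabeling):
    (act : ∀ i : Fin N, Equiv.Perm (Fin (i.1 + 1)) → Λ i → Λ i)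
    (hact_one : ∀ i x, act i 1 x = x)
    (hact_mul : ∀ i π σ x, act i (π * σ) x = act i π (act i σ x))
    (hC : ∀ i π x, x ∈ C i → act i π x ∈ C i)
    (hCne : ∀ i, (C i).Nonempty) :
    -- `U_C` is hereditary:
    (∀ S T : URStr N Λ, InUC C T → S.Sub T → InUC C S) ∧
    -- has the joint embedding property:
    (∀ A B : URStr N Λ, InUC C A → InUC C B →
      ∃ (D : URStr N Λ) (f g : ℕ → ℕ), InUC C D ∧
        URStr.Emb f A D ∧ URStr.Emb g B D) ∧
    -- has disjoint amalgamation: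
    (∀ A B B' : URStr N Λ, InUC C A → InUC C B → InUC C B' →
      A.Sub B → A.Sub B' → (↑B.V ∩ ↑B'.V : Set ℕ) = ↑A.V →
      ∃ D : URStr N Λ, InUC C D ∧ B.Sub D ∧ B'.Sub D ∧ D.V = B.V ∪ B'.V) ∧
    -- and satisfies SDAP:
    (∀ A Cst : URStr N Λ, InUC C A → InUC C Cst → A.Sub Cst →
      ∀ v w : ℕ, v ∉ A.V → w ∉ A.V → v < w → (∀ a ∈ A.V, a < v) →
      (↑Cst.V : Set ℕ) = ↑A.V ∪ {v, w} →
      ∃ (A' C' : URStr N Λ) (v' w' : ℕ), InUC C A' ∧ InUC C C' ∧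
        A.Sub A' ∧ A'.Sub C' ∧ v' ∉ A'.V ∧ w' ∉ A'.V ∧ v' < w' ∧
        (∀ a ∈ A'.V, a < v') ∧ (↑C'.V : Set ℕ) = ↑A'.V ∪ {v', w'} ∧
        -- `C'` is a disjoint amalgam of `A'` and `C` over `A`:
        (∀ (i : Fin N) (e : Fin (i.1 + 1) → ℕ), StrictMono e →
          (∀ k, e k ∈ A.V ∨ e k = v ∨ e k = w) →
          Cst.lab i e = C'.lab i
            (fun k => if e k = v then v' else if e k = w then w' else e k)) ∧
        -- such that for all `B ⊇ A'` in `U_C`: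
        (∀ B : URStr N Λ, InUC C B → A'.Sub B →
         -- all 1-types `σ`, `τ` over `B`, presented by one-point extensions
         -- `Bσ = B ∪ {vσ}`, `Bτ = B ∪ {wτ}` in `U_C`:
         ∀ (Bσ Bτ : URStr N Λ) (vσ wτ : ℕ), InUC C Bσ → InUC C Bτ →
           B.Sub Bσ → B.Sub Bτ → vσ ∉ B.V → wτ ∉ B.V →
           (∀ b ∈ B.V, b < vσ) → (∀ b ∈ B.V, b < wτ) →
           (↑Bσ.V : Set ℕ) = insert vσ ↑B.V → (↑Bτ.V : Set ℕ) = insert wτ ↑B.V →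
           -- with `σ ↾ A' = tp(v'/A')` and `τ ↾ A' = tp(w'/A')`:
           TypeMatch C' v' Bσ vσ A'.V → TypeMatch C' w' Bτ wτ A'.V →
           -- for any one-point extension `D` of `B` in `U_C` realizing `σ`:
           ∀ (D : URStr N Λ) (v'' : ℕ), InUC C D → B.Sub D → v'' ∉ B.V →
             (∀ b ∈ B.V, b < v'') → (↑D.V : Set ℕ) = insert v'' ↑B.V →
             TypeMatch Bσ vσ D v'' B.V →
           -- there is a one-point extension `E` of `D` in `U_C` realizing `τ`
           ∃ (E : URStr N Λ) (w'' : ℕ), InUC C E ∧ D.Sub E ∧ w'' ∉ D.V ∧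
             v'' < w'' ∧ (↑E.V : Set ℕ) = insert w'' ↑D.V ∧
             TypeMatch Bτ wτ E w'' B.V ∧
             -- with `E ↾ (A ∪ {v'', w''}) ≅ Cst`:
             (∀ (i : Fin N) (e : Fin (i.1 + 1) → ℕ), StrictMono e →
               (∀ k, e k ∈ A.V ∨ e k = v ∨ e k = w) →
               Cst.lab i e = E.lab i
                 (fun k => if e k = v then v'' else if e k = w then w'' else e k)))) :=
  unrestricted_class_is_fraisse_with_disjoint_amalgamation_and_SDAP_general C hCne
end
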